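/- arXiv:1306.1972 — 8 statements merged into one kernel-verified Lean document; each statement's English description precedes it below -/
import Mathlib

section
/- If G is a non-abelian group of unitary n×n complex matrices, then for no members A, B of G can the rank of AB − BA be equal to one. -/
/-!
Writing `C = A B A⁻¹ B⁻¹`, we have `AB - BA = (C - 1) BA` with `BA` invertible, and `C` is
unitary of determinant one. If `M = C - 1` has rank at most one, the matrix determinant lemma
gives `1 = det (1 + M) = 1 + tr M`; unitarity of `1 + M` reads `Mᴴ M = -(M + Mᴴ)`, so
`tr (Mᴴ M) = 0` and hence `M = 0`.
-/

open Matrix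
open scoped ComplexOrder commutatorElement

namespace Matrix

theorem exists_eq_vecMulVec_of_rank_le_one {K m n : Type*} [Field K] [Fintype n]
    [DecidableEq n] {M : Matrix m n K} (h : M.rank ≤ 1) :
    ∃ (u : m → K) (v : n → K), M = vecMulVec u v := by
  obtain ⟨w, hw⟩ := finrank_le_one_iff.mp h
  choose c hc using fun j => hw ⟨_, LinearMap.mem_range_self M.mulVecLin (Pi.single j 1)⟩
  refine ⟨w, c, ?_⟩
  ext i j
  simpa [vecMulVec_apply, mul_comm] using (congr_fun (congr_arg Subtype.val (hc j)) i).symm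

theorem det_one_add_eq_one_add_trace_of_rank_le_one {K n : Type*} [Field K] [Fintype n]
    [DecidableEq n] {M : Matrix n n K} (h : M.rank ≤ 1) : (1 + M).det = 1 + M.trace := by
  obtain ⟨u, v, rfl⟩ := exists_eq_vecMulVec_of_rank_le_one h
  rw [vecMulVec_eq Unit, det_one_add_replicateCol_mul_replicateRow,
    trace_replicateCol_mul_replicateRow, dotProduct_comm]

namespace UnitaryGroup

variable {𝕜 n : Type*} [RCLike 𝕜] [Fintype n] [DecidableEq n]

theorem eq_one_of_det_eq_one_of_rank_sub_one_le_one {U : unitaryGroup n 𝕜}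
    (hdet : (U : Matrix n n 𝕜).det = 1) (hrank : ((U : Matrix n n 𝕜) - 1).rank ≤ 1) :
    U = 1 := by
  set M := (U : Matrix n n 𝕜) - 1 with hM
  have htrace : M.trace = 0 := by
    have := det_one_add_eq_one_add_trace_of_rank_le_one hrank
    rwa [hM, add_sub_cancel, hdet, left_eq_add] at this
  have hunitary : Mᴴ * M = -(M + Mᴴ) := by
    have hU : (U : Matrix n n 𝕜)ᴴ * U = 1 := star_mul_self U
    rw [hM, conjTranspose_sub, conjTranspose_one, sub_mul, mul_sub, mul_sub, hU]
    noncomm_ring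
  have hM0 : M = 0 := by
    rw [← trace_conjTranspose_mul_self_eq_zero_iff, hunitary, trace_neg, trace_add,
      trace_conjTranspose, htrace, star_zero, add_zero, neg_zero]
  exact Subtype.ext (sub_eq_zero.mp hM0)

theorem det_commutatorElement (A B : unitaryGroup n 𝕜) :
    ((⁅A, B⁆ : unitaryGroup n 𝕜) : Matrix n n 𝕜).det = 1 := by
  let det' : unitaryGroup n 𝕜 →* 𝕜ˣ :=
    (detMonoidHom.comp (unitaryGroup n 𝕜).subtype).toHomUnits
  have : det' ⁅A, B⁆ = 1 := by
    rw [map_commutatorElement, commutatorElement_eq_one_iff_mul_comm, mul_comm]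
  exact congr_arg Units.val this

theorem rank_mul_sub_mul_eq_rank_commutatorElement_sub_one (A B : unitaryGroup n 𝕜) :
    ((A : Matrix n n 𝕜) * B - B * A).rank =
      ((⁅A, B⁆ : unitaryGroup n 𝕜) - 1 : Matrix n n 𝕜).rank := by
  set a : Matrix n n 𝕜 := (A : Matrix n n 𝕜)
  set b : Matrix n n 𝕜 := (B : Matrix n n 𝕜)
  have ha : star a * a = 1 := star_mul_self A
  have hb : star b * b = 1 := star_mul_self B
  have hfactor : a * b - b * a =
      ((⁅A, B⁆ : unitaryGroup n 𝕜) - 1 : Matrix n n 𝕜) *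
        ((B * A : unitaryGroup n 𝕜) : Matrix n n 𝕜) := by
    simp only [commutatorElement_def, mul_val, inv_val, sub_mul, one_mul]
    rw [show a * b * star a * star b * (b * a) = a * b * star a * (star b * b) * a by noncomm_ring,
      hb, mul_one, mul_assoc _ (star a), ha, mul_one]
  rw [hfactor, rank_mul_eq_left_of_isUnit_det _ _ (det_isUnit _)]

end UnitaryGroup

end Matrix

theorem stmt0_general (n : ℕ) (G : Subgroup (Matrix.unitaryGroup (Fin n) ℂ)) :
    ∀ A ∈ G, ∀ B ∈ G,
      ((A : Matrix (Fin n) (Fin n) ℂ) * (B : Matrix (Fin n) (Fin n) ℂ)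
        - (B : Matrix (Fin n) (Fin n) ℂ) * (A : Matrix (Fin n) (Fin n) ℂ)).rank ≠ 1 := by
  intro A _ B _ hrank
  rw [UnitaryGroup.rank_mul_sub_mul_eq_rank_commutatorElement_sub_one] at hrank
  have hcomm := UnitaryGroup.eq_one_of_det_eq_one_of_rank_sub_one_le_one
    (UnitaryGroup.det_commutatorElement A B) hrank.le
  simp [hcomm] at hrank

/-- If `G` is a non-abelian group of unitary `n × n` complex matrices, then for no members
`A`, `B` of `G` can the rank of `A * B - B * A` be equal to one. -/
theorem stmt0 (n : ℕ) (G : Subgroup (Matrix.unitaryGroup (Fin n) ℂ))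
    (hna : ∃ A ∈ G, ∃ B ∈ G, A * B ≠ B * A) :
    ∀ A ∈ G, ∀ B ∈ G,
      ((A : Matrix (Fin n) (Fin n) ℂ) * (B : Matrix (Fin n) (Fin n) ℂ)
        - (B : Matrix (Fin n) (Fin n) ℂ) * (A : Matrix (Fin n) (Fin n) ℂ)).rank ≠ 1 :=
  stmt0_general n G
end

section
/- If U is a unitary n×n matrix with rank(U − I) ≤ 2 and det(U) = 1, and U ≠ I, then U is unitarily similar to a diagonal matrix diag(ω, ω̄, 1, …, 1) for some complex number ω ≠ 1 with |ω| = 1. -/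
/-!
A unitary operator `T` has mutually orthogonal eigenspaces, all of whose eigenvalues lie on the
unit circle. The orthogonal complement of their sum is `T`-invariant (in finite dimension an
isometry maps an invariant subspace onto itself) and contains no eigenvector, so it is zero over
`ℂ`. Hence a unitary matrix is unitarily diagonalizable, `V U V⋆ = diag μ` with `‖μ i‖ = 1`.
Then `rank (U - 1)` counts the `i` with `μ i ≠ 1`, while `det U = ∏ μ i = 1`. As `U ≠ 1` some
`μ p` differs from `1`, and it cannot be the only one, so there are exactly two, `μ p = ω` and
`μ q = ω⁻¹ = conj ω`; permuting the eigenbasis moves them to the first two positions.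
-/

open Matrix Module End
open scoped ComplexConjugate InnerProductSpace

theorem Equiv.Perm.exists_apply_eq_and_apply_eq {α : Type*} [DecidableEq α] {a b p q : α}
    (hab : a ≠ b) (hpq : p ≠ q) : ∃ σ : Perm α, σ a = p ∧ σ b = q := by
  set τ := swap a p
  refine ⟨τ * swap b (τ q), ?_, by simp [τ, swap_apply_self]⟩
  have hτq : τ q ≠ a := fun h => hpq (by rw [← τ.apply_eq_iff_eq, h]; simp [τ])
  simp [swap_apply_of_ne_of_ne hab hτq.symm, τ]

theorem Fin.exists_perm_apply_eq_ite {n : ℕ} {M : Type*} [One M] {μ : Fin n → M} {p q : Fin n}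
    (hpq : p ≠ q) (hrest : ∀ i, i ≠ p → i ≠ q → μ i = 1) :
    ∃ σ : Equiv.Perm (Fin n), ∀ i,
      μ (σ i) = if (i : ℕ) = 0 then μ p else if (i : ℕ) = 1 then μ q else 1 := by
  have hn : 1 < n := by
    have := Fin.val_ne_of_ne hpq
    omega
  obtain ⟨σ, hσ0, hσ1⟩ := Equiv.Perm.exists_apply_eq_and_apply_eq
    (a := ⟨0, hn.pos⟩) (b := ⟨1, hn⟩) (by simp) hpq
  refine ⟨σ, fun i => ?_⟩
  split_ifs with h0 h1
  · rw [show i = ⟨0, hn.pos⟩ from Fin.ext h0, hσ0]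
  · rw [show i = ⟨1, hn⟩ from Fin.ext h1, hσ1]
  · refine hrest _ ?_ ?_
    · rw [← hσ0, Ne, σ.apply_eq_iff_eq]
      exact fun h => h0 (congrArg Fin.val h)
    · rw [← hσ1, Ne, σ.apply_eq_iff_eq]
      exact fun h => h1 (congrArg Fin.val h)

theorem Fintype.exists_pair_of_prod_eq_one_of_card_le_two {ι M : Type*} [Fintype ι]
    [CommMonoid M] [DecidableEq M] {f : ι → M} (hprod : ∏ i, f i = 1)
    (hcard : Fintype.card {i // f i ≠ 1} ≤ 2) (hpos : 0 < Fintype.card {i // f i ≠ 1}) :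
    ∃ p q, p ≠ q ∧ f p ≠ 1 ∧ f p * f q = 1 ∧ ∀ i, i ≠ p → i ≠ q → f i = 1 := by
  obtain ⟨⟨p, hp⟩⟩ := Fintype.card_pos_iff.mp hpos
  obtain ⟨q, hqp, hq⟩ : ∃ q, q ≠ p ∧ f q ≠ 1 := by
    by_contra! h
    exact hp (by rwa [Fintype.prod_eq_single p fun i hi => h i hi] at hprod)
  have hrest : ∀ i, i ≠ p → i ≠ q → f i = 1 := by
    intro i hip hiq
    by_contra hi
    rw [Fintype.card_subtype] at hcard
    refine hcard.not_gt (Finset.two_lt_card_iff.mpr ⟨p, q, i, ?_⟩)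
    simp_all [eq_comm]
  refine ⟨p, q, hqp.symm, hp, ?_, hrest⟩
  rwa [Fintype.prod_eq_mul p q hqp.symm fun i hi => hrest i hi.1 hi.2] at hprod

namespace LinearIsometryEquiv

section RCLike

variable {𝕜 E : Type*} [RCLike 𝕜] [NormedAddCommGroup E] [InnerProductSpace 𝕜 E]
  (T : E ≃ₗᵢ[𝕜] E)

theorem norm_eq_one_of_apply_eq_smul {μ : 𝕜} {v : E} (hv : T v = μ • v) (hv₀ : v ≠ 0) :
    ‖μ‖ = 1 := by
  have h := T.norm_map v
  rw [hv, norm_smul] at h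
  exact (mul_eq_right₀ (norm_ne_zero_iff.mpr hv₀)).mp h

theorem orthogonalFamily_eigenspaces :
    OrthogonalFamily 𝕜 (fun μ => eigenspace (T : E →ₗ[𝕜] E) μ)
      fun μ => (eigenspace (T : E →ₗ[𝕜] E) μ).subtypeₗᵢ := by
  rintro μ ν hμν ⟨v, hv⟩ ⟨w, hw⟩
  replace hv : T v = μ • v := mem_eigenspace_iff.mp hv
  replace hw : T w = ν • w := mem_eigenspace_iff.mp hw
  simp only [Submodule.coe_subtypeₗᵢ, Submodule.coe_subtype]
  by_cases hv₀ : v = 0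
  · simp [hv₀]
  have hμ : conj μ * μ = 1 := by
    rw [RCLike.conj_mul, T.norm_eq_one_of_apply_eq_smul hv hv₀]
    simp
  have hvw : ⟪v, w⟫_𝕜 = conj μ * ν * ⟪v, w⟫_𝕜 := by
    have := T.inner_map_map v w
    rw [hv, hw, inner_smul_left, inner_smul_right, ← mul_assoc] at this
    exact this.symm
  by_contra h
  have hν : conj μ * ν = 1 := mul_right_cancel₀ h (by rw [one_mul]; exact hvw.symm)
  exact hμν (mul_left_cancel₀ (left_ne_zero_of_mul_eq_one hμ) (hμ.trans hν.symm))

theorem map_orthogonal_of_map_le {S : Submodule 𝕜 E} [FiniteDimensional 𝕜 S]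
    (hS : S.map (T.toLinearEquiv : E →ₗ[𝕜] E) ≤ S) :
    Sᗮ.map (T.toLinearEquiv : E →ₗ[𝕜] E) = Sᗮ := by
  rw [Submodule.map_orthogonal_equiv,
    Submodule.eq_of_le_of_finrank_eq hS (LinearEquiv.finrank_map_eq _ _)]

end RCLike

variable {E : Type*} [NormedAddCommGroup E] [InnerProductSpace ℂ E] [FiniteDimensional ℂ E]
  (T : E ≃ₗᵢ[ℂ] E)

theorem orthogonalComplement_iSup_eigenspaces_eq_bot :
    (⨆ μ, eigenspace (T : E →ₗ[ℂ] E) μ)ᗮ = ⊥ := by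
  set S := ⨆ μ, eigenspace (T : E →ₗ[ℂ] E) μ
  have hS : S.map (T.toLinearEquiv : E →ₗ[ℂ] E) ≤ S := by
    rw [Submodule.map_iSup]
    refine iSup_mono fun μ => ?_
    rintro _ ⟨x, hx, rfl⟩
    have hx : T x = μ • x := mem_eigenspace_iff.mp hx
    exact mem_eigenspace_iff.mpr (show T (T x) = μ • T x by rw [hx, map_smul, hx])
  have hinv : ∀ x ∈ Sᗮ, T x ∈ Sᗮ := fun x hx =>
    T.map_orthogonal_of_map_le hS ▸ Submodule.mem_map_of_mem hx
  by_contra hne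
  have : Nontrivial Sᗮ := Submodule.nontrivial_iff_ne_bot.mpr hne
  obtain ⟨μ, hμ⟩ := exists_eigenvalue ((T : E →ₗ[ℂ] E).restrict hinv)
  exact hμ (eigenspace_restrict_eq_bot hinv
    ((Submodule.isOrtho_orthogonal_right _).mono_left (le_iSup _ μ)).disjoint)

theorem exists_orthonormalBasis_apply_eq_smul {n : ℕ} (hn : finrank ℂ E = n) :
    ∃ (b : OrthonormalBasis (Fin n) ℂ E) (μ : Fin n → ℂ), ∀ i, T (b i) = μ i • b i := by
  have hOF : OrthogonalFamily ℂ (fun μ : Eigenvalues (T : E →ₗ[ℂ] E) =>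
      eigenspace (T : E →ₗ[ℂ] E) μ) fun μ => (eigenspace (T : E →ₗ[ℂ] E) μ).subtypeₗᵢ :=
    T.orthogonalFamily_eigenspaces.comp Subtype.coe_injective
  have hint : DirectSum.IsInternal fun μ : Eigenvalues (T : E →ₗ[ℂ] E) =>
      eigenspace (T : E →ₗ[ℂ] E) μ :=
    hOF.isInternal_iff.mpr (by
      show (⨆ μ : { μ // eigenspace (T : E →ₗ[ℂ] E) μ ≠ ⊥ }, eigenspace (T : E →ₗ[ℂ] E) μ)ᗮ = ⊥
      rw [iSup_ne_bot_subtype, T.orthogonalComplement_iSup_eigenspaces_eq_bot])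
  exact ⟨hint.subordinateOrthonormalBasis hn hOF,
    fun i => (hint.subordinateOrthonormalBasisIndex hn i hOF).val,
    fun i => mem_eigenspace_iff.mp (hint.subordinateOrthonormalBasis_subordinate hn i hOF)⟩

end LinearIsometryEquiv

namespace Matrix

theorem rank_pos_of_ne_zero {m n K : Type*} [Fintype n] [DecidableEq n] [Field K]
    {A : Matrix m n K} (h : A ≠ 0) : 0 < A.rank := by
  rw [rank, Module.finrank_pos_iff, Submodule.nontrivial_iff_ne_bot, Ne, LinearMap.range_eq_bot]
  exact fun h' => h (toLin'.injective (h'.trans mulVecLin_zero.symm))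

variable {ι : Type*} [Fintype ι] [DecidableEq ι]

section Field

variable {K : Type*} [Field K] [StarRing K] {A : Matrix ι ι K} {V : unitaryGroup ι K}
  {μ : ι → K}

theorem det_eq_prod_of_conj_eq_diagonal
    (h : (V : Matrix ι ι K) * A * star (V : Matrix ι ι K) = diagonal μ) :
    A.det = ∏ i, μ i := by
  rw [← det_diagonal, ← h, det_mul, det_mul, mul_right_comm, ← det_mul,
    Unitary.mul_star_self_of_mem V.2, det_one, one_mul]

theorem rank_sub_one_eq_card_of_conj_eq_diagonal [DecidableEq K]
    (h : (V : Matrix ι ι K) * A * star (V : Matrix ι ι K) = diagonal μ) :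
    (A - 1).rank = Fintype.card {i // μ i ≠ 1} := by
  have hVV : (V : Matrix ι ι K) * star (V : Matrix ι ι K) = 1 :=
    Unitary.mul_star_self_of_mem V.2
  have hconj : (V : Matrix ι ι K) * (A - 1) * star (V : Matrix ι ι K) =
      diagonal fun i => μ i - 1 := by
    rw [Matrix.mul_sub, Matrix.sub_mul, h, Matrix.mul_one, hVV, ← diagonal_sub, diagonal_one]
  rw [← rank_mul_eq_right_of_isUnit_det _ _ (isUnit_det_of_right_inverse hVV),
    ← rank_mul_eq_left_of_isUnit_det _ _ (isUnit_det_of_left_inverse hVV), hconj, rank_diagonal]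
  simp only [sub_ne_zero]

end Field

theorem exists_unitary_conj_eq_diagonal {𝕜 : Type*} [RCLike 𝕜] {A : Matrix ι ι 𝕜}
    (b : OrthonormalBasis ι 𝕜 (EuclideanSpace 𝕜 ι)) (μ : ι → 𝕜)
    (h : ∀ i, A *ᵥ b i = μ i • b i) :
    ∃ V : unitaryGroup ι 𝕜, (V : Matrix ι ι 𝕜) * A * star (V : Matrix ι ι 𝕜) = diagonal μ := by
  set W := (EuclideanSpace.basisFun ι 𝕜).toBasis.toMatrix b.toBasis
  have hW : W ∈ unitaryGroup ι 𝕜 :=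
    (EuclideanSpace.basisFun ι 𝕜).toMatrix_orthonormalBasis_mem_unitary b
  have hAW : A * W = W * diagonal μ := by
    ext i j
    simpa [W, mul_apply, mulVec, dotProduct, mul_comm, Basis.toMatrix_apply, diagonal_apply]
      using congrFun (h j) i
  refine ⟨star ⟨W, hW⟩, ?_⟩
  simp only [Unitary.coe_star, star_star]
  rw [Matrix.mul_assoc, hAW, ← Matrix.mul_assoc, (mem_unitaryGroup_iff').mp hW, Matrix.one_mul]

theorem exists_orthonormalBasis_mulVec_eq_smul_of_mem_unitaryGroup {U : Matrix ι ι ℂ}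
    (hU : U ∈ unitaryGroup ι ℂ) :
    ∃ (b : OrthonormalBasis ι ℂ (EuclideanSpace ℂ ι)) (μ : ι → ℂ),
      ∀ i, ‖μ i‖ = 1 ∧ U *ᵥ b i = μ i • b i := by
  let T := Unitary.linearIsometryEquiv
    ⟨toEuclideanCLM (n := ι) (𝕜 := ℂ) U, Unitary.map_mem _ hU⟩
  have hT : ∀ x, T x = toEuclideanCLM (n := ι) (𝕜 := ℂ) U x := fun x => rfl
  obtain ⟨b, μ, hb⟩ := T.exists_orthonormalBasis_apply_eq_smul finrank_euclideanSpace
  let e := Fintype.equivFin ι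
  refine ⟨b.reindex e.symm, μ ∘ e, fun i =>
    ⟨T.norm_eq_one_of_apply_eq_smul (hb _) (b.orthonormal.ne_zero _), ?_⟩⟩
  simpa [hT, ofLp_toEuclideanCLM] using congrArg WithLp.ofLp (hb (e i))

end Matrix

/-- A unitary `U ≠ I` with `rank (U - I) ≤ 2` and `det U = 1` is unitarily similar to
`diag (ω, conj ω, 1, …, 1)` for some `ω ≠ 1` on the unit circle. -/
theorem stmt3 (n : ℕ) (U : Matrix.unitaryGroup (Fin n) ℂ)
    (h1 : ((U : Matrix (Fin n) (Fin n) ℂ) - 1).rank ≤ 2)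
    (h2 : (U : Matrix (Fin n) (Fin n) ℂ).det = 1)
    (h3 : (U : Matrix (Fin n) (Fin n) ℂ) ≠ 1) :
    ∃ ω : ℂ, ω ≠ 1 ∧ ‖ω‖ = 1 ∧
      ∃ V : Matrix.unitaryGroup (Fin n) ℂ,
        (V : Matrix (Fin n) (Fin n) ℂ) * (U : Matrix (Fin n) (Fin n) ℂ)
            * star (V : Matrix (Fin n) (Fin n) ℂ) =
          Matrix.diagonal (fun i : Fin n =>
            if (i : ℕ) = 0 then ω else if (i : ℕ) = 1 then (starRingEnd ℂ) ω else 1) := by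
  obtain ⟨b, μ, hμ⟩ := exists_orthonormalBasis_mulVec_eq_smul_of_mem_unitaryGroup U.2
  obtain ⟨V, hV⟩ := exists_unitary_conj_eq_diagonal b μ fun i => (hμ i).2
  have hcard := rank_sub_one_eq_card_of_conj_eq_diagonal hV
  obtain ⟨p, q, hpq, hp, hpq1, hrest⟩ := Fintype.exists_pair_of_prod_eq_one_of_card_le_two
    (det_eq_prod_of_conj_eq_diagonal hV ▸ h2) (hcard ▸ h1)
    (hcard ▸ rank_pos_of_ne_zero (sub_ne_zero.mpr h3))
  have hq : μ q = conj (μ p) := by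
    rw [← Complex.inv_eq_conj (hμ p).1]
    exact eq_inv_of_mul_eq_one_right hpq1
  obtain ⟨σ, hσ⟩ := Fin.exists_perm_apply_eq_ite hpq hrest
  refine ⟨μ p, hp, (hμ p).1, exists_unitary_conj_eq_diagonal (b.reindex σ.symm) _ fun i => ?_⟩
  rw [b.reindex_apply, Equiv.symm_symm, (hμ _).2, hσ, hq]
end

section
/- Let p, q be primes and G = G(p,q,A) as in the standard construction. Every multiplicative commutator XYX⁻¹Y⁻¹ with X, Y in G is a diagonal matrix whose diagonal entries are q-th roots of unity and whose determinant equals one. -/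
/-!
Write a matrix with entries `d j` at positions `(j + k, j)` and zeros elsewhere as a shifted
diagonal matrix with shift `k`. Shifts add under multiplication and are negated by the conjugate
transpose, so both generators of `G(p,q,A)`, hence every element of it, are shifted diagonal
matrices with `q`-th roots of unity as entries, and in a commutator the shifts cancel. Its
determinant is one because `det` takes values in a commutative monoid.
-/

open Matrix
open scoped commutatorElement

theorem MonoidHom.map_commutatorElement_eq_one {G M : Type*} [Group G] [CommMonoid M]
    (f : G →* M) (g h : G) : f ⁅g, h⁆ = 1 := by
  rw [← f.coe_toHomUnits, map_commutatorElement,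
    commutatorElement_eq_one_iff_commute.2 (Commute.all _ _), Units.val_one]

namespace Matrix

variable {n R : Type*} [AddCommGroup n] [DecidableEq n]

def shiftDiagonal [Zero R] (k : n) (d : n → R) : Matrix n n R :=
  of fun i j => if i = j + k then d j else 0

theorem shiftDiagonal_zero [Zero R] (d : n → R) : shiftDiagonal 0 d = diagonal d := by
  ext i j
  simp only [shiftDiagonal, of_apply, add_zero, diagonal_apply]
  split_ifs with h <;> simp [h]

theorem shiftDiagonal_mul_shiftDiagonal [Fintype n] [NonUnitalNonAssocSemiring R]
    (k l : n) (d e : n → R) :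
    shiftDiagonal k d * shiftDiagonal l e = shiftDiagonal (k + l) fun j => d (j + l) * e j := by
  ext i j
  simp only [shiftDiagonal, mul_apply, of_apply]
  rw [Finset.sum_eq_single (j + l) (fun x _ hx => by simp [hx]) (by simp)]
  simp only [add_assoc, add_comm l k]
  split_ifs <;> simp

theorem conjTranspose_shiftDiagonal [AddMonoid R] [StarAddMonoid R] (k : n) (d : n → R) :
    (shiftDiagonal k d)ᴴ = shiftDiagonal (-k) fun j => star (d (j - k)) := by
  ext i j
  simp only [shiftDiagonal, conjTranspose_apply, of_apply, ← sub_eq_add_neg,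
    eq_sub_iff_add_eq, eq_comm (a := j)]
  split_ifs with h
  · rw [← h, add_sub_cancel_right]
  · exact star_zero R

section CommSemiring

variable [CommSemiring R]

def IsShiftDiagonal (q : ℕ) (k : n) (M : Matrix n n R) : Prop :=
  ∃ d : n → R, (∀ i, d i ^ q = 1) ∧ M = shiftDiagonal k d

theorem isShiftDiagonal_one (q : ℕ) : IsShiftDiagonal q (0 : n) (1 : Matrix n n R) :=
  ⟨1, fun _ => one_pow q, (shiftDiagonal_zero 1).trans diagonal_one |>.symm⟩

theorem IsShiftDiagonal.mul [Fintype n] {q : ℕ} {k l : n} {M N : Matrix n n R}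
    (hM : IsShiftDiagonal q k M) (hN : IsShiftDiagonal q l N) :
    IsShiftDiagonal q (k + l) (M * N) := by
  obtain ⟨d, hd, rfl⟩ := hM
  obtain ⟨e, he, rfl⟩ := hN
  exact ⟨_, fun i => by rw [mul_pow, hd, he, one_mul], shiftDiagonal_mul_shiftDiagonal k l d e⟩

theorem IsShiftDiagonal.conjTranspose [StarRing R] {q : ℕ} {k : n} {M : Matrix n n R}
    (hM : IsShiftDiagonal q k M) : IsShiftDiagonal q (-k) Mᴴ := by
  obtain ⟨d, hd, rfl⟩ := hM
  exact ⟨_, fun i => by rw [← star_pow, hd, star_one], conjTranspose_shiftDiagonal k d⟩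

end CommSemiring

section UnitaryGroup

variable (R) [Fintype n] [CommRing R] [StarRing R]

def shiftDiagonalSubgroup (q : ℕ) : Subgroup (unitaryGroup n R) where
  carrier := {U | ∃ k, IsShiftDiagonal q k (U : Matrix n n R)}
  one_mem' := ⟨0, isShiftDiagonal_one q⟩
  mul_mem' := fun ⟨k, hU⟩ ⟨l, hV⟩ => ⟨k + l, hU.mul hV⟩
  inv_mem' := fun ⟨k, hU⟩ => ⟨-k, hU.conjTranspose⟩

variable {R}

theorem exists_diagonal_commutator_of_isShiftDiagonal {q : ℕ} {k l : n}
    {X Y : unitaryGroup n R} (hX : IsShiftDiagonal q k (X : Matrix n n R))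
    (hY : IsShiftDiagonal q l (Y : Matrix n n R)) :
    ∃ d : n → R, (∀ i, d i ^ q = 1) ∧ ((X * Y * X⁻¹ * Y⁻¹ : unitaryGroup n R) : Matrix n n R)
      = diagonal d := by
  -- the inverse of a unitary matrix is, definitionally, its conjugate transpose
  have hcomm := ((hX.mul hY).mul hX.conjTranspose).mul hY.conjTranspose
  rw [show k + l + -k + -l = 0 by abel] at hcomm
  obtain ⟨d, hd, hXY⟩ := hcomm
  exact ⟨d, hd, by rw [← shiftDiagonal_zero, ← hXY]; rfl⟩

end UnitaryGroup

end Matrix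

theorem stmt6_general (p q : ℕ) [NeZero p]
    (SU AU : Matrix.unitaryGroup (Fin p) ℂ)
    (hS : (SU : Matrix (Fin p) (Fin p) ℂ)
      = Matrix.of fun i j : Fin p => if i = j + 1 then (1 : ℂ) else 0)
    (ω : Fin p → ℂ) (hA : (AU : Matrix (Fin p) (Fin p) ℂ) = Matrix.diagonal ω)
    (hω : ∀ i, ω i ^ q = 1)
    (G : Subgroup (Matrix.unitaryGroup (Fin p) ℂ)) (hG : G = Subgroup.closure {SU, AU}) :
    ∀ X ∈ G, ∀ Y ∈ G, ∃ d : Fin p → ℂ, (∀ i, d i ^ q = 1) ∧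
      ((X * Y * X⁻¹ * Y⁻¹ : Matrix.unitaryGroup (Fin p) ℂ) : Matrix (Fin p) (Fin p) ℂ)
        = Matrix.diagonal d ∧ (Matrix.diagonal d).det = 1 := by
  have hGle : G ≤ shiftDiagonalSubgroup ℂ q := by
    rw [hG, Subgroup.closure_le]
    rintro U (rfl | rfl)
    · exact ⟨1, 1, fun _ => one_pow q, hS⟩
    · exact ⟨0, ω, hω, by rw [hA, shiftDiagonal_zero]⟩
  intro X hX Y hY
  obtain ⟨k, hXk⟩ := hGle hX
  obtain ⟨l, hYl⟩ := hGle hY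
  obtain ⟨d, hd, hXY⟩ := exists_diagonal_commutator_of_isShiftDiagonal hXk hYl
  refine ⟨d, hd, hXY, ?_⟩
  rw [← hXY]
  exact (detMonoidHom.comp (unitaryGroup (Fin p) ℂ).subtype).map_commutatorElement_eq_one X Y

/-- Every multiplicative commutator in `G(p,q,A)` is a diagonal matrix whose diagonal entries
are `q`-th roots of unity and whose determinant is one. -/
theorem stmt6 (p q : ℕ) [NeZero p] (hp : p.Prime) (hq : q.Prime)
    (SU AU : Matrix.unitaryGroup (Fin p) ℂ)
    (hS : (SU : Matrix (Fin p) (Fin p) ℂ)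
      = Matrix.of fun i j : Fin p => if i = j + 1 then (1 : ℂ) else 0)
    (ω : Fin p → ℂ) (hA : (AU : Matrix (Fin p) (Fin p) ℂ) = Matrix.diagonal ω)
    (hω : ∀ i, ω i ^ q = 1) (hns : ∃ i j, ω i ≠ ω j)
    (G : Subgroup (Matrix.unitaryGroup (Fin p) ℂ)) (hG : G = Subgroup.closure {SU, AU}) :
    ∀ X ∈ G, ∀ Y ∈ G, ∃ d : Fin p → ℂ, (∀ i, d i ^ q = 1) ∧
      ((X * Y * X⁻¹ * Y⁻¹ : Matrix.unitaryGroup (Fin p) ℂ) : Matrix (Fin p) (Fin p) ℂ)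
        = Matrix.diagonal d ∧ (Matrix.diagonal d).det = 1 :=
  stmt6_general p q SU AU hS ω hA hω G hG
end

section
/- Let p, q be primes and A a non-scalar p×p diagonal matrix with diagonal entries that are q-th roots of unity. If rank(XY − YX) ≤ 2 for all X, Y in G(p,q,A), with equality attained for some pair, then either p = 2, or p = 3 and q = 2. -/
/-!
For a diagonal `D = diag d`, `S D - D S = S · diag (d - d (· + 1))`, so the rank of this
commutator counts the jumps of `d`, i.e. the `i` with `d (i + 1) ≠ d i`, around the cycle `Fin p`.
The unimodular diagonals lying in `G` form a subgroup `H` of `Fin p → Circle` which is stable under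
the cyclic shift (conjugation by `S`), hence under the multiplicative difference
`Δf i = f (i + 1) / f i`, and all of whose elements have at most two jumps.

The diagonal `f` of `A` is not constant, and `∏ Δf = 1` forbids a single jump, so `Δf` is supported
on two points; these must be adjacent, `u` and `u + 1`, with values `c` and `c⁻¹`. If `c ≠ c⁻¹` then
`Δf` jumps at `u - 1`, `u`, `u + 1`; so `c` has order `2`, and then `Δ(Δf)` is supported on
`u - 1` and `u + 1`, which are adjacent only when `p = 3`. Finally `c` is a `q`-th root of unity of
order `2`, so `q = 2`.
-/

open Finset Function Matrix

section CyclicFunctions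

open Fin.CommRing

variable {n : ℕ} [NeZero n]

theorem Fin.natCast_ne_zero_of_pos_of_lt {k : ℕ} (h0 : 0 < k) (hk : k < n) : (k : Fin n) ≠ 0 := by
  rw [Ne, Fin.natCast_eq_zero]
  exact fun h => (Nat.le_of_dvd h0 h).not_gt hk

theorem Fin.one_ne_zero_of_two_le (hn : 2 ≤ n) : (1 : Fin n) ≠ 0 := by
  exact_mod_cast Fin.natCast_ne_zero_of_pos_of_lt Nat.one_pos hn

theorem Fin.two_ne_zero_of_three_le (hn : 3 ≤ n) : (2 : Fin n) ≠ 0 := by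
  exact_mod_cast Fin.natCast_ne_zero_of_pos_of_lt (by norm_num : 0 < 2) hn

open Classical in
noncomputable def jumps {α : Type*} (f : Fin n → α) : Finset (Fin n) := {i | f (i + 1) ≠ f i}

@[simp]
theorem mem_jumps {α : Type*} {f : Fin n → α} {i : Fin n} :
    i ∈ jumps f ↔ f (i + 1) ≠ f i := by
  simp [jumps]

theorem jumps_comp {α β : Type*} {φ : α → β} (hφ : Injective φ)
    (f : Fin n → α) : jumps (fun i => φ (f i)) = jumps f := by
  ext i
  simp [hφ.ne_iff]

variable {M : Type*} [CommGroup M]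

def mulFwdDiff (f : Fin n → M) (i : Fin n) : M := f (i + 1) / f i

theorem mulSupport_mulFwdDiff (f : Fin n → M) :
    mulSupport (mulFwdDiff f) = jumps f := by
  ext i
  simp [mulFwdDiff, div_eq_one]

theorem prod_mulFwdDiff (f : Fin n → M) : ∏ i, mulFwdDiff f i = 1 := by
  simp only [mulFwdDiff, prod_div_distrib, div_eq_one]
  exact Fintype.prod_equiv (Equiv.addRight 1) _ _ fun _ => rfl

theorem card_jumps_ne_one (f : Fin n → M) : #(jumps f) ≠ 1 := by
  intro h
  obtain ⟨u, hu⟩ := card_eq_one.mp h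
  have hsupp : mulSupport (mulFwdDiff f) = {u} := by rw [mulSupport_mulFwdDiff, hu, coe_singleton]
  have hu' : mulFwdDiff f u ≠ 1 := mem_mulSupport.mp (by simp [hsupp])
  have hprod := prod_mulFwdDiff f
  rw [prod_eq_single u (fun i _ hi => notMem_mulSupport.mp (by simp [hsupp, hi])) (by simp)]
    at hprod
  exact hu' hprod

theorem jumps_nonempty {α : Type*} {f : Fin n → α} (hf : ∃ i j, f i ≠ f j) :
    (jumps f).Nonempty := by
  by_contra! hempty
  have hstep (k : ℕ) : f k = f 0 := by
    induction k with
    | zero => simp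
    | succ k ih =>
      have := notMem_empty (k : Fin n)
      rw [← hempty, mem_jumps, not_not] at this
      push_cast
      rw [this, ih]
  obtain ⟨i, j, hij⟩ := hf
  exact hij (by simpa using (hstep i).trans (hstep j).symm)

theorem one_lt_card_jumps {f : Fin n → M} (hf : ∃ i j, f i ≠ f j) :
    1 < #(jumps f) := by
  have := card_jumps_ne_one f
  have := (jumps_nonempty hf).card_pos
  omega

theorem adjacent_of_mulSupport_eq_pair {g : Fin n → M} {u v : Fin n}
    (huv : u ≠ v) (hg : mulSupport g = {u, v}) (hj : #(jumps g) ≤ 2) :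
    v = u + 1 ∨ u = v + 1 := by
  have h1 := Fin.one_ne_zero_of_two_le (Fin.nontrivial_iff_two_le.mp ⟨u, v, huv⟩)
  have hu : g u ≠ 1 := mem_mulSupport.mp (by simp [hg])
  have hv : g v ≠ 1 := mem_mulSupport.mp (by simp [hg])
  have hout (i : Fin n) (hiu : i ≠ u) (hiv : i ≠ v) : g i = 1 :=
    notMem_mulSupport.mp (by simp [hg, hiu, hiv])
  by_contra! ⟨hvu, huv'⟩
  -- `g` enters its support at `u` and leaves it after `u` and after `v`
  refine hj.not_gt (two_lt_card_iff.mpr ⟨u - 1, u, v, mem_jumps.mpr ?_, mem_jumps.mpr ?_,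
    mem_jumps.mpr ?_, fun h => h1 (by linear_combination -h),
    fun h => huv' (by linear_combination h), huv⟩)
  · rw [sub_add_cancel, hout (u - 1) (fun h => h1 (by linear_combination -h))
      (fun h => huv' (by linear_combination h))]
    exact hu
  · rw [hout (u + 1) (fun h => h1 (by linear_combination h)) hvu.symm]
    exact hu.symm
  · rw [hout (v + 1) huv'.symm (fun h => h1 (by linear_combination h))]
    exact hv.symm

theorem eq_of_mulSupport_eq_adjacent_pair (hn : 3 ≤ n) {g : Fin n → M}
    {u : Fin n} (hg : mulSupport g = {u, u + 1}) (hj : #(jumps g) ≤ 2) : g u = g (u + 1) := by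
  have h1 := Fin.one_ne_zero_of_two_le (by omega : 2 ≤ n)
  have h2 := Fin.two_ne_zero_of_three_le hn
  have hu : g u ≠ 1 := mem_mulSupport.mp (by simp [hg])
  have hu' : g (u + 1) ≠ 1 := mem_mulSupport.mp (by simp [hg])
  have hout (i : Fin n) (hiu : i ≠ u) (hiv : i ≠ u + 1) : g i = 1 :=
    notMem_mulSupport.mp (by simp [hg, hiu, hiv])
  by_contra hne
  refine hj.not_gt (two_lt_card_iff.mpr ⟨u - 1, u, u + 1, mem_jumps.mpr ?_, mem_jumps.mpr ?_,
    mem_jumps.mpr ?_, fun h => h1 (by linear_combination -h),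
    fun h => h2 (by linear_combination -h), fun h => h1 (by linear_combination -h)⟩)
  · rw [sub_add_cancel, hout (u - 1) (fun h => h1 (by linear_combination -h))
      (fun h => h2 (by linear_combination -h))]
    exact hu
  · exact Ne.symm hne
  · rw [hout (u + 1 + 1) (fun h => h2 (by linear_combination h))
      (fun h => h1 (by linear_combination h))]
    exact hu'.symm

theorem exists_ne_of_mulSupport_eq_adjacent_pair (hn : 3 ≤ n) {g : Fin n → M} {u : Fin n}
    (hg : mulSupport g = {u, u + 1}) : ∃ i j, g i ≠ g j := by
  have h1 := Fin.one_ne_zero_of_two_le (by omega : 2 ≤ n)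
  have h2 := Fin.two_ne_zero_of_three_le hn
  have hu2 : u + 1 + 1 ∉ mulSupport g := by
    simp only [hg, Set.mem_insert_iff, Set.mem_singleton_iff, not_or]
    exact ⟨fun h => h2 (by linear_combination h), fun h => h1 (by linear_combination h)⟩
  refine ⟨u, u + 1 + 1, ?_⟩
  rw [notMem_mulSupport.mp hu2]
  exact mem_mulSupport.mp (by simp [hg])

theorem orderOf_mulFwdDiff_eq_two (hn : 2 ≤ n) {f : Fin n → M} {u : Fin n}
    (hu : mulSupport (mulFwdDiff f) = {u, u + 1})
    (hconst : mulFwdDiff f u = mulFwdDiff f (u + 1)) : orderOf (mulFwdDiff f u) = 2 := by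
  have h1 := Fin.one_ne_zero_of_two_le hn
  have hprod : mulFwdDiff f u * mulFwdDiff f (u + 1) = 1 := by
    rw [← prod_mulFwdDiff f]
    refine (prod_eq_mul u (u + 1) (fun h => h1 (by linear_combination -h)) (fun i _ hi => ?_)
      (by simp) (by simp)).symm
    exact notMem_mulSupport.mp (by simp [hu, hi.1, hi.2])
  have := Fact.mk Nat.prime_two
  exact orderOf_eq_prime (by rw [sq]; nth_rw 2 [hconst]; exact hprod)
    (mem_mulSupport.mp (by simp [hu]))

theorem eq_three_of_mulSupport_eq_adjacent_pair (hn : 3 ≤ n) {g : Fin n → M} {u w : Fin n}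
    (hg : mulSupport g = {u, u + 1}) (hconst : g u = g (u + 1))
    (hw : mulSupport (mulFwdDiff g) = {w, w + 1}) : n = 3 := by
  have h1 := Fin.one_ne_zero_of_two_le (by omega : 2 ≤ n)
  have h2 := Fin.two_ne_zero_of_three_le hn
  have hgu : g u ≠ 1 := mem_mulSupport.mp (by simp [hg])
  have hout (i : Fin n) (hiu : i ≠ u) (hiv : i ≠ u + 1) : g i = 1 :=
    notMem_mulSupport.mp (by simp [hg, hiu, hiv])
  have hjw (i : Fin n) : i ∈ jumps g ↔ i = w ∨ i = w + 1 := by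
    rw [← mem_coe, ← mulSupport_mulFwdDiff, hw]; rfl
  have hprev : u - 1 ∈ jumps g := by
    rw [mem_jumps, sub_add_cancel, hout (u - 1) (fun h => h1 (by linear_combination -h))
      (fun h => h2 (by linear_combination -h))]
    exact hgu
  have hnext : u + 1 ∈ jumps g := by
    rw [mem_jumps, hout (u + 1 + 1) (fun h => h2 (by linear_combination h))
      (fun h => h1 (by linear_combination h)), ← hconst]
    exact hgu.symm
  have hcur : u ∉ jumps g := by simp [hconst]
  -- `u - 1` and `u + 1` are jumps of `g` but `u` is not, so `w + 1 = u - 1` and `w = u + 1`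
  have h3 : ((3 : ℕ) : Fin n) = 0 := by
    push_cast
    rcases (hjw _).mp hprev with h | h <;> rcases (hjw _).mp hnext with h' | h'
    · exact absurd (by linear_combination h' - h) h2
    · exact absurd ((hjw u).mpr (.inl (by linear_combination h'))) hcur
    · linear_combination h' - h
    · exact absurd (by linear_combination h' - h) h2
  exact le_antisymm (Nat.le_of_dvd three_pos (Fin.natCast_eq_zero.mp h3)) hn

theorem mulFwdDiff_mem {H : Subgroup (Fin n → M)} (hshift : ∀ h ∈ H, (fun i => h (i + 1)) ∈ H)
    {h : Fin n → M} (hh : h ∈ H) : mulFwdDiff h ∈ H :=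
  H.div_mem (hshift h hh) hh

section ShiftInvariant

variable (H : Subgroup (Fin n → M))
  (hshift : ∀ h ∈ H, (fun i => h (i + 1)) ∈ H) (hjumps : ∀ h ∈ H, #(jumps h) ≤ 2)

include hshift hjumps in
theorem exists_mulSupport_mulFwdDiff_eq {h : Fin n → M} (hh : h ∈ H) (hc : ∃ i j, h i ≠ h j) :
    ∃ u, mulSupport (mulFwdDiff h) = {u, u + 1} := by
  obtain ⟨u, v, huv, hJ⟩ :=
    card_eq_two.mp (le_antisymm (hjumps h hh) (one_lt_card_jumps hc))
  have hsupp : mulSupport (mulFwdDiff h) = {u, v} := by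
    rw [mulSupport_mulFwdDiff, hJ, coe_pair]
  rcases adjacent_of_mulSupport_eq_pair huv hsupp (hjumps _ (mulFwdDiff_mem hshift hh))
    with rfl | rfl
  · exact ⟨u, hsupp⟩
  · exact ⟨v, by rw [hsupp, Set.pair_comm]⟩

include hshift hjumps in
theorem eq_three_and_exists_orderOf_mulFwdDiff_eq_two (hn : 3 ≤ n) {f : Fin n → M} (hf : f ∈ H)
    (hc : ∃ i j, f i ≠ f j) : n = 3 ∧ ∃ i, orderOf (mulFwdDiff f i) = 2 := by
  obtain ⟨u, hu⟩ := exists_mulSupport_mulFwdDiff_eq H hshift hjumps hf hc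
  have hgH : mulFwdDiff f ∈ H := mulFwdDiff_mem hshift hf
  have hconst := eq_of_mulSupport_eq_adjacent_pair hn hu (hjumps _ hgH)
  obtain ⟨w, hw⟩ := exists_mulSupport_mulFwdDiff_eq H hshift hjumps hgH
    (exists_ne_of_mulSupport_eq_adjacent_pair hn hu)
  exact ⟨eq_three_of_mulSupport_eq_adjacent_pair hn hu hconst hw, u,
    orderOf_mulFwdDiff_eq_two (by omega) hu hconst⟩

end ShiftInvariant

def cyclicShift (n : ℕ) [NeZero n] (R : Type*) [Zero R] [One R] : Matrix (Fin n) (Fin n) R :=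
  of fun i j => if i = j + 1 then 1 else 0

theorem cyclicShift_eq_permMatrix (R : Type*) [Zero R] [One R] :
    cyclicShift n R = Equiv.Perm.permMatrix R (Equiv.subRight (1 : Fin n)) := by
  ext i j
  simp [cyclicShift, PEquiv.toMatrix_apply, eq_sub_iff_add_eq, eq_comm]

theorem isUnit_det_cyclicShift (R : Type*) [CommRing R] : IsUnit (cyclicShift n R).det := by
  rw [cyclicShift_eq_permMatrix, det_permutation]
  exact (Equiv.Perm.sign _).isUnit.map (Int.castRingHom R)

theorem diagonal_mul_cyclicShift {R : Type*} [Semiring R] (d : Fin n → R) :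
    diagonal d * cyclicShift n R = cyclicShift n R * diagonal fun i => d (i + 1) := by
  ext i j
  by_cases h : i = j + 1 <;> simp [cyclicShift, h]

theorem rank_cyclicShift_mul_diagonal_sub {K : Type*} [Field K] (d : Fin n → K) :
    (cyclicShift n K * diagonal d - diagonal d * cyclicShift n K).rank = #(jumps d) := by
  classical
  rw [diagonal_mul_cyclicShift, ← mul_sub, diagonal_sub,
    rank_mul_eq_right_of_isUnit_det _ _ (isUnit_det_cyclicShift K), rank_diagonal,
    Fintype.card_subtype]
  congr 1
  ext i
  simp [sub_eq_zero, ne_comm]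

end CyclicFunctions

def diagonalCircle (ι : Type*) [Fintype ι] [DecidableEq ι] :
    (ι → Circle) →* unitaryGroup ι ℂ where
  toFun u := ⟨diagonal fun i => (u i : ℂ), mem_unitaryGroup_iff.mpr <| by
    rw [star_eq_conjTranspose, diagonal_conjTranspose, diagonal_mul_diagonal, ← diagonal_one]
    congr 1
    ext i
    simp [← Circle.coe_inv_eq_conj]⟩
  map_one' := Subtype.ext <| by simp
  map_mul' u v := Subtype.ext <| by simp [diagonal_mul_diagonal]

@[simp]
theorem coe_diagonalCircle {ι : Type*} [Fintype ι] [DecidableEq ι] (u : ι → Circle) :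
    (diagonalCircle ι u : Matrix ι ι ℂ) = diagonal fun i => (u i : ℂ) :=
  rfl

theorem diagonalCircle_comp_add_one {n : ℕ} [NeZero n] {S : unitaryGroup (Fin n) ℂ}
    (hS : (S : Matrix (Fin n) (Fin n) ℂ) = cyclicShift n ℂ) (u : Fin n → Circle) :
    diagonalCircle (Fin n) (fun i => u (i + 1)) = S⁻¹ * diagonalCircle (Fin n) u * S := by
  apply Subtype.ext
  rw [UnitaryGroup.mul_val, UnitaryGroup.mul_val, UnitaryGroup.inv_val, coe_diagonalCircle,
    coe_diagonalCircle, mul_assoc, hS, diagonal_mul_cyclicShift, ← mul_assoc, ← hS,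
    UnitaryGroup.star_mul_self, one_mul]

theorem comp_add_one_mem_comap_diagonalCircle {n : ℕ} [NeZero n]
    {G : Subgroup (unitaryGroup (Fin n) ℂ)} {S : unitaryGroup (Fin n) ℂ}
    (hS : (S : Matrix (Fin n) (Fin n) ℂ) = cyclicShift n ℂ) (hSG : S ∈ G) {u : Fin n → Circle}
    (hu : u ∈ G.comap (diagonalCircle (Fin n))) :
    (fun i => u (i + 1)) ∈ G.comap (diagonalCircle (Fin n)) := by
  rw [Subgroup.mem_comap, diagonalCircle_comp_add_one hS]
  exact G.mul_mem (G.mul_mem (G.inv_mem hSG) hu) hSG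

theorem card_jumps_eq_rank {n : ℕ} [NeZero n] {S : unitaryGroup (Fin n) ℂ}
    (hS : (S : Matrix (Fin n) (Fin n) ℂ) = cyclicShift n ℂ) (u : Fin n → Circle) :
    #(jumps u) = ((S : Matrix (Fin n) (Fin n) ℂ) * diagonalCircle (Fin n) u
      - diagonalCircle (Fin n) u * S).rank := by
  -- `Circle.coe_injective` is stated on the underlying subtype, hence the explicit `α`
  rw [coe_diagonalCircle, hS, rank_cyclicShift_mul_diagonal_sub,
    jumps_comp (α := Circle) Circle.coe_injective]

theorem stmt7_general (p q : ℕ) [NeZero p] (hq : q.Prime)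
    (SU AU : Matrix.unitaryGroup (Fin p) ℂ)
    (hS : (SU : Matrix (Fin p) (Fin p) ℂ)
      = Matrix.of fun i j : Fin p => if i = j + 1 then (1 : ℂ) else 0)
    (ω : Fin p → ℂ) (hA : (AU : Matrix (Fin p) (Fin p) ℂ) = Matrix.diagonal ω)
    (hω : ∀ i, ω i ^ q = 1) (hns : ∃ i j, ω i ≠ ω j)
    (G : Subgroup (Matrix.unitaryGroup (Fin p) ℂ)) (hG : G = Subgroup.closure {SU, AU})
    (hle : ∀ X ∈ G, ∀ Y ∈ G,
      ((X : Matrix (Fin p) (Fin p) ℂ) * (Y : Matrix (Fin p) (Fin p) ℂ)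
        - (Y : Matrix (Fin p) (Fin p) ℂ) * (X : Matrix (Fin p) (Fin p) ℂ)).rank ≤ 2) :
    p = 2 ∨ (p = 3 ∧ q = 2) := by
  have hS' : (SU : Matrix (Fin p) (Fin p) ℂ) = cyclicShift p ℂ := hS
  have hSG : SU ∈ G := hG ▸ Subgroup.subset_closure (by simp)
  have hAG : AU ∈ G := hG ▸ Subgroup.subset_closure (by simp)
  let f : Fin p → Circle := fun i =>
    ⟨ω i, mem_sphere_zero_iff_norm.mpr (Complex.norm_eq_one_of_pow_eq_one (hω i) hq.ne_zero)⟩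
  let H := G.comap (diagonalCircle (Fin p))
  have hfH : f ∈ H := by
    rwa [Subgroup.mem_comap, show diagonalCircle (Fin p) f = AU from Subtype.ext (by rw [hA]; rfl)]
  have hshift : ∀ h ∈ H, (fun i => h (i + 1)) ∈ H := fun _ =>
    comp_add_one_mem_comap_diagonalCircle hS' hSG
  have hjumps : ∀ h ∈ H, #(jumps h) ≤ 2 := fun h hh =>
    (card_jumps_eq_rank hS' h).trans_le (hle SU hSG _ hh)
  obtain ⟨i, j, hij⟩ := hns
  have hfc : ∃ i j, f i ≠ f j := ⟨i, j, fun h => hij (congrArg Subtype.val h)⟩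
  have hp2le : 2 ≤ p := Fin.nontrivial_iff_two_le.mp ⟨i, j, ne_of_apply_ne ω hij⟩
  rcases eq_or_ne p 2 with hp2 | hp2
  · exact Or.inl hp2
  obtain ⟨hp3, k, hk⟩ :=
    eq_three_and_exists_orderOf_mulFwdDiff_eq_two H hshift hjumps (by omega) hfH hfc
  have hfq (i : Fin p) : f i ^ q = 1 := Subtype.ext (hω i)
  have hdvd : 2 ∣ q := hk ▸ orderOf_dvd_of_pow_eq_one (by simp [mulFwdDiff, div_pow, hfq])
  exact Or.inr ⟨hp3, ((Nat.prime_dvd_prime_iff_eq Nat.prime_two hq).mp hdvd).symm⟩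

/-- If `rank (XY - YX) ≤ 2` on `G(p,q,A)` with equality attained, then `p = 2`, or
`p = 3` and `q = 2`. -/
theorem stmt7 (p q : ℕ) [NeZero p] (hp : p.Prime) (hq : q.Prime)
    (SU AU : Matrix.unitaryGroup (Fin p) ℂ)
    (hS : (SU : Matrix (Fin p) (Fin p) ℂ)
      = Matrix.of fun i j : Fin p => if i = j + 1 then (1 : ℂ) else 0)
    (ω : Fin p → ℂ) (hA : (AU : Matrix (Fin p) (Fin p) ℂ) = Matrix.diagonal ω)
    (hω : ∀ i, ω i ^ q = 1) (hns : ∃ i j, ω i ≠ ω j)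
    (G : Subgroup (Matrix.unitaryGroup (Fin p) ℂ)) (hG : G = Subgroup.closure {SU, AU})
    (hle : ∀ X ∈ G, ∀ Y ∈ G,
      ((X : Matrix (Fin p) (Fin p) ℂ) * (Y : Matrix (Fin p) (Fin p) ℂ)
        - (Y : Matrix (Fin p) (Fin p) ℂ) * (X : Matrix (Fin p) (Fin p) ℂ)).rank ≤ 2)
    (heq : ∃ X ∈ G, ∃ Y ∈ G,
      ((X : Matrix (Fin p) (Fin p) ℂ) * (Y : Matrix (Fin p) (Fin p) ℂ)
        - (Y : Matrix (Fin p) (Fin p) ℂ) * (X : Matrix (Fin p) (Fin p) ℂ)).rank = 2) :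
    p = 2 ∨ (p = 3 ∧ q = 2) :=
  stmt7_general p q hq SU AU hS ω hA hω hns G hG hle
end

section
/- Let p ≥ 5 be prime, S the p×p cyclic permutation matrix, and A₀ = diag(ω, ω̄, 1, …, 1) with ω ≠ 1 a root of unity. Then rank(A₀S² − S²A₀) = 4. -/
/-!
With the shift matrices `Tₖ i j = [i = j + k]` on `Fin p` we have `S = T₁` and `S² = T₂`.
Conjugating a diagonal matrix by a shift shifts its diagonal, `T₂ D T₂⁻¹ = diag (d (i - 2))`,
hence `D S² - S² D = diag (d i - d (i - 2)) S²`. As `S²` is invertible, the rank is the number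
of indices with `d i ≠ d (i - 2)`; for `d = (ω, ω̄, 1, …, 1)` these are exactly `i = 0, 1, 2, 3`.
-/

open Matrix Finset

section ShiftMatrix

variable {G R : Type*} [AddCommGroup G] [DecidableEq G]

def shiftMatrix [Zero R] [One R] (k : G) : Matrix G G R :=
  of fun i j => if i = j + k then 1 else 0

theorem shiftMatrix_apply [Zero R] [One R] (k i j : G) :
    (shiftMatrix k : Matrix G G R) i j = if i = j + k then 1 else 0 := rfl

theorem shiftMatrix_zero [Zero R] [One R] : (shiftMatrix 0 : Matrix G G R) = 1 := by
  ext i j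
  simp [shiftMatrix_apply, one_apply]

variable [Fintype G]

theorem shiftMatrix_add [NonAssocSemiring R] (a b : G) :
    (shiftMatrix (a + b) : Matrix G G R) = shiftMatrix a * shiftMatrix b := by
  ext i j
  simp [shiftMatrix_apply, mul_apply, ← add_assoc, add_right_comm j b a]

theorem isUnit_det_shiftMatrix [CommRing R] (k : G) :
    IsUnit (shiftMatrix k : Matrix G G R).det :=
  isUnit_det_of_right_inverse (B := shiftMatrix (-k)) <| by
    rw [← shiftMatrix_add, add_neg_cancel, shiftMatrix_zero]

theorem shiftMatrix_mul_diagonal [NonAssocSemiring R] (k : G) (d : G → R) :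
    shiftMatrix k * diagonal d = diagonal (fun i => d (i - k)) * shiftMatrix k := by
  ext i j
  by_cases h : i = j + k <;> simp [shiftMatrix_apply, h]

theorem rank_diagonal_mul_shiftMatrix_sub [Field R] [DecidableEq R] (k : G) (d : G → R) :
    (diagonal d * shiftMatrix k - shiftMatrix k * diagonal d).rank = #{i | d i ≠ d (i - k)} := by
  rw [shiftMatrix_mul_diagonal, ← sub_mul, diagonal_sub,
    rank_mul_eq_left_of_isUnit_det _ _ (isUnit_det_shiftMatrix k), rank_diagonal,
    Fintype.card_subtype]
  simp only [sub_ne_zero]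

end ShiftMatrix

theorem Fin.card_filter_ne_sub_two {α : Type*} [DecidableEq α] {p : ℕ} [NeZero p] (hp : 4 ≤ p)
    {d : Fin p → α} {c : α} (hlow : ∀ i : Fin p, (i : ℕ) < 2 → d i ≠ c)
    (hhigh : ∀ i : Fin p, 2 ≤ (i : ℕ) → d i = c) :
    #{i | d i ≠ d (i - 2)} = 4 := by
  have h2 : ((2 : Fin p) : ℕ) = 2 := Nat.mod_eq_of_lt (by omega : 2 < p)
  have hsupp : ∀ i : Fin p, d i ≠ d (i - 2) ↔ (i : ℕ) < 4 := by
    intro i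
    rcases le_or_gt 2 (i : ℕ) with hi | hi
    · have hv : ((i - 2 : Fin p) : ℕ) = i - 2 := by
        rw [Fin.coe_sub_iff_le.2 (by rwa [Fin.le_def, h2]), h2]
      rw [hhigh i hi]
      rcases lt_or_ge (i : ℕ) 4 with h4 | h4
      · simpa [h4] using (hlow (i - 2) (by omega)).symm
      · simpa [not_lt.2 h4] using (hhigh (i - 2) (by omega)).symm
    · have hv : ((i - 2 : Fin p) : ℕ) = p + i - 2 := by
        rw [Fin.coe_sub_iff_lt.2 (by rwa [Fin.lt_def, h2]), h2]
      rw [hhigh (i - 2) (by omega)]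
      simpa [show (i : ℕ) < 4 by omega] using hlow i hi
  rw [filter_congr fun i _ => hsupp i, Fin.card_filter_val_lt]
  omega

theorem stmt8_general (p : ℕ) [NeZero p] (hp5 : 5 ≤ p)
    (S : Matrix (Fin p) (Fin p) ℂ)
    (hS : S = Matrix.of fun i j : Fin p => if i = j + 1 then (1 : ℂ) else 0)
    (ω : ℂ) (hω1 : ω ≠ 1)
    (A₀ : Matrix (Fin p) (Fin p) ℂ)
    (hA : A₀ = Matrix.diagonal (fun i : Fin p =>
      if (i : ℕ) = 0 then ω else if (i : ℕ) = 1 then (starRingEnd ℂ) ω else 1)) :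
    (A₀ * S ^ 2 - S ^ 2 * A₀).rank = 4 := by
  have hS2 : S ^ 2 = shiftMatrix 2 := by
    rw [sq, show S = shiftMatrix 1 from hS, ← shiftMatrix_add]
    exact congrArg shiftMatrix (Fin.ext (by simp [Fin.val_add]))
  rw [hS2, hA, rank_diagonal_mul_shiftMatrix_sub]
  refine Fin.card_filter_ne_sub_two (c := 1) (by omega) (fun i hi => ?_) (fun i hi => ?_)
  · have hω1' : (starRingEnd ℂ) ω ≠ 1 := (map_ne_one_iff _ (RingHom.injective _)).2 hω1
    interval_cases (i : ℕ) <;> simp [hω1, hω1']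
  · simp [show (i : ℕ) ≠ 0 by omega, show (i : ℕ) ≠ 1 by omega]

/-- For prime `p ≥ 5`, `S` the cyclic permutation and `A₀ = diag (ω, conj ω, 1, …, 1)` with
`ω ≠ 1` on the unit circle, `rank (A₀ S² - S² A₀) = 4`. -/
theorem stmt8 (p : ℕ) [NeZero p] (hp : p.Prime) (hp5 : 5 ≤ p)
    (S : Matrix (Fin p) (Fin p) ℂ)
    (hS : S = Matrix.of fun i j : Fin p => if i = j + 1 then (1 : ℂ) else 0)
    (ω : ℂ) (hω1 : ω ≠ 1) (hωa : ‖ω‖ = 1)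
    (A₀ : Matrix (Fin p) (Fin p) ℂ)
    (hA : A₀ = Matrix.diagonal (fun i : Fin p =>
      if (i : ℕ) = 0 then ω else if (i : ℕ) = 1 then (starRingEnd ℂ) ω else 1)) :
    (A₀ * S ^ 2 - S ^ 2 * A₀).rank = 4 :=
  stmt8_general p hp5 S hS ω hω1 A₀ hA
end

section
/- Let S be a multiplicative semigroup of n×n complex matrices and N a subspace of ℂⁿ such that, in the block decomposition with respect to ℂⁿ = N ⊕ N^⊥, every Z ∈ S has lower-left block Z₂₁ of rank at most 1. Then each Z ∈ S admits a Z-invariant subspace N_Z such that either N_Z ⊆ N with dim(N/N_Z) ≤ 1, or N ⊆ N_Z with dim(N_Z/N) ≤ 1 and N_Z = span(N ∪ Z N). -/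
/-!
Write `N = ker q`, where `q` is the orthogonal projection onto `Nᗮ`, so that `q (T N)` is the
range of `Z₂₁` and `q (T² N)` that of `(Z²)₂₁`, both of dimension at most one. If
`q (T² N) ≤ q (T N)`, then `T² N ≤ N ⊔ T N`, so `N ⊔ T N` is invariant, of dimension at most
`dim N + 1`. Otherwise `{x ∈ N | T x ∈ N}`, of codimension at most one in `N` by rank-nullity, is
invariant: for `x` in it, a nonzero `q (T² x)` would lie in `q (T N)` and span the line `q (T² N)`.
-/

open Matrix

namespace Submodule

open Module LinearMap

variable {K E F : Type*} [Field K] [AddCommGroup E] [Module K E] [AddCommGroup F] [Module K F]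

theorem finrank_map_add_finrank_inf_ker [FiniteDimensional K E] (f : E →ₗ[K] F)
    (p : Submodule K E) : finrank K (p.map f) + finrank K ↥(p ⊓ ker f) = finrank K p := by
  have h := (f.domRestrict p).finrank_range_add_finrank_ker
  rwa [range_domRestrict, ker_domRestrict, ← finrank_map_subtype_eq, map_comap_subtype] at h

theorem le_of_finrank_le_one_of_inf_ne_bot {A B : Submodule K E} [FiniteDimensional K A]
    (hA : finrank K A ≤ 1) (h : A ⊓ B ≠ ⊥) : A ≤ B := by
  have hpos : finrank K ↥(A ⊓ B) ≠ 0 := mt Submodule.finrank_eq_zero.mp h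
  have hAB : A ⊓ B = A := eq_of_le_of_finrank_le inf_le_left (by omega)
  exact inf_eq_left.mp hAB

section Compression

variable (q : E →ₗ[K] F) (T : E →ₗ[K] E)

theorem map_sup_map_ker_le (h : (ker q).map (q ∘ₗ T ∘ₗ T) ≤ (ker q).map (q ∘ₗ T)) :
    (ker q ⊔ (ker q).map T).map T ≤ ker q ⊔ (ker q).map T := by
  have hTT : (ker q).map (T ∘ₗ T) ≤ ker q ⊔ (ker q).map T :=
    calc (ker q).map (T ∘ₗ T) ≤ ((ker q).map (q ∘ₗ T ∘ₗ T)).comap q := by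
          rw [Submodule.map_comp _ q]; exact le_comap_map q _
      _ ≤ ((ker q).map (q ∘ₗ T)).comap q := comap_mono h
      _ = ker q ⊔ (ker q).map T := by rw [Submodule.map_comp, comap_map_eq, sup_comm]
  rw [map_sup, ← map_comp]
  exact sup_le le_sup_right hTT

theorem map_inf_comap_ker_le [FiniteDimensional K E]
    (hsq : finrank K ((ker q).map (q ∘ₗ T ∘ₗ T)) ≤ 1)
    (h : ¬ (ker q).map (q ∘ₗ T ∘ₗ T) ≤ (ker q).map (q ∘ₗ T)) :
    (ker q ⊓ (ker q).comap T).map T ≤ ker q ⊓ (ker q).comap T := by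
  rintro _ ⟨x, ⟨hx, hTx⟩, rfl⟩
  refine ⟨hTx, by_contra fun hTTx => h (le_of_finrank_le_one_of_inf_ne_bot hsq ?_)⟩
  exact (Submodule.ne_bot_iff _).mpr ⟨q (T (T x)), ⟨⟨x, hx, rfl⟩, T x, hTx, rfl⟩, hTTx⟩

theorem finrank_sup_map_ker [FiniteDimensional K E] :
    finrank K ↥(ker q ⊔ (ker q).map T) =
      finrank K ((ker q).map (q ∘ₗ T)) + finrank K (ker q) := by
  rw [← finrank_map_add_finrank_inf_ker q, map_sup, le_ker_iff_map.mp le_rfl, bot_sup_eq,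
    inf_eq_right.mpr le_sup_left, Submodule.map_comp]

theorem finrank_ker_eq_finrank_inf_comap_add [FiniteDimensional K E] :
    finrank K (ker q) =
      finrank K ↥(ker q ⊓ (ker q).comap T) + finrank K ((ker q).map (q ∘ₗ T)) := by
  rw [← finrank_map_add_finrank_inf_ker (q ∘ₗ T), ker_comp, add_comm]

theorem exists_invariant_of_finrank_map_ker_le_one [FiniteDimensional K E]
    {N : Submodule K E} (hN : ker q = N) (hT : finrank K (N.map (q ∘ₗ T)) ≤ 1)
    (hsq : finrank K (N.map (q ∘ₗ T ∘ₗ T)) ≤ 1) :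
    ∃ NZ : Submodule K E, NZ.map T ≤ NZ ∧
      ((NZ ≤ N ∧ finrank K N ≤ finrank K NZ + 1) ∨
       (N ≤ NZ ∧ finrank K NZ ≤ finrank K N + 1 ∧ NZ = N ⊔ N.map T)) := by
  subst hN
  by_cases h : (ker q).map (q ∘ₗ T ∘ₗ T) ≤ (ker q).map (q ∘ₗ T)
  · refine ⟨_, map_sup_map_ker_le q T h, .inr ⟨le_sup_left, ?_, rfl⟩⟩
    rw [finrank_sup_map_ker]
    omega
  · refine ⟨_, map_inf_comap_ker_le q T hsq h, .inl ⟨inf_le_left, ?_⟩⟩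
    rw [finrank_ker_eq_finrank_inf_comap_add q T]
    omega

end Compression

end Submodule

/-- If every `Z` in a semigroup `S` of `n × n` matrices has lower-left block `Z₂₁`
(w.r.t. `ℂⁿ = N ⊕ N^⊥`) of rank at most one, then every `Z ∈ S` has an invariant subspace
`N_Z` with either `N_Z ⊆ N` and `dim (N / N_Z) ≤ 1`, or `N ⊆ N_Z`, `dim (N_Z / N) ≤ 1`
and `N_Z = span (N ∪ Z N)`. -/
theorem stmt11 (n : ℕ) (S : Subsemigroup (Matrix (Fin n) (Fin n) ℂ))
    (N : Submodule ℂ (EuclideanSpace ℂ (Fin n)))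
    (hrk : ∀ Z ∈ S, Module.finrank ℂ
      (LinearMap.range (((Submodule.orthogonalProjectionOnto Nᗮ).toLinearMap.comp
        (Matrix.toEuclideanLin Z)).comp N.subtype)) ≤ 1) :
    ∀ Z ∈ S, ∃ NZ : Submodule ℂ (EuclideanSpace ℂ (Fin n)),
      NZ.map (Matrix.toEuclideanLin Z) ≤ NZ ∧
      ((NZ ≤ N ∧ Module.finrank ℂ N ≤ Module.finrank ℂ NZ + 1) ∨
       (N ≤ NZ ∧ Module.finrank ℂ NZ ≤ Module.finrank ℂ N + 1 ∧
        NZ = N ⊔ N.map (Matrix.toEuclideanLin Z))) := by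
  intro Z hZ
  set P := (Submodule.orthogonalProjectionOnto Nᗮ).toLinearMap
  have hker : LinearMap.ker P = N :=
    Submodule.ker_orthogonalProjectionOnto.trans N.orthogonal_orthogonal
  have hrank : ∀ Y ∈ S, Module.finrank ℂ (N.map (P ∘ₗ toEuclideanLin Y)) ≤ 1 := fun Y hY => by
    have h := hrk Y hY
    rwa [LinearMap.range_comp, Submodule.range_subtype] at h
  have hsq := hrank (Z * Z) (mul_mem hZ hZ)
  rw [toLpLin_mul_same] at hsq
  exact Submodule.exists_invariant_of_finrank_map_ker_le_one P _ hker (hrank Z hZ) hsq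
end

section
/- Let G be a group of unitary n×n matrices with rank(AB − BA) ≤ 2 for all A, B ∈ G. Then there exists a subspace M of ℂⁿ with 1 ≤ dim M ≤ 3 such that M is invariant under every element of G (hence so is M^⊥), and the restriction group G|_{M^⊥} is abelian. -/
/-!
For a unitary `g`, `ker (g - 1) = (range (g - 1))ᗮ`, and a unitary of determinant one never has
`rank (g - 1) = 1`: it would be the identity on the hyperplane `ker (g - 1)` and act on the
orthogonal line by its determinant. Since `rank (AB - BA) = rank (⁅A, B⁆ - 1)`, every commutator
`w` has `rank (w - 1) ∈ {0, 2}`, and so do its restrictions to an invariant subspace `V` and to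
`Vᗮ`. These two ranks add up to `rank (w - 1)`, so each commutator is trivial on `V` or on `Vᗮ`;
as a group is not the union of two proper subgroups, `G` acts commutatively on `V` or on `Vᗮ`.

If `G` is abelian, take for `M` a common eigenline. Otherwise pick a commutator `w ≠ 1`; then
`R = range (w - 1)` is a plane, and `M` is the span of its translates `gR = range (gwg⁻¹ - 1)`.
Two translates meet, for otherwise `rank (gwg⁻¹ - hwh⁻¹) ≥ 4`, while `gwg⁻¹ - hwh⁻¹` is a
commutator minus one times a unit. Planes meeting pairwise lie in a `3`-space or share a line, and
a line shared by all translates is invariant, hence fixed by `w`, although it lies in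
`range (w - 1) ⊥ ker (w - 1)`. So `2 ≤ dim M ≤ 3`; `G` cannot act commutatively on `M`, as
`w ≠ 1` on `R ⊆ M`, so it does on `Mᗮ`.
-/

open Module
open scoped InnerProductSpace commutatorElement
open LinearMap (ker range)

namespace Submodule

variable {K V : Type*} [Field K] [AddCommGroup V] [Module K V]

theorem eq_of_le_of_ne_bot_of_finrank_le_one {A B : Submodule K V} [FiniteDimensional K B]
    (hAB : A ≤ B) (hA : A ≠ ⊥) (hB : finrank K B ≤ 1) : A = B := by
  have : FiniteDimensional K A := Submodule.finiteDimensional_of_le hAB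
  exact eq_of_le_of_finrank_le hAB (hB.trans (one_le_finrank_iff.mpr hA))

variable [FiniteDimensional K V]

theorem inf_sup_eq_inf_of_not_le {A B C : Submodule K V} (hAB : finrank K ↥(A ⊓ B) ≤ 1)
    (hC : finrank K C ≤ 2) (hCA : C ⊓ A ≠ ⊥) (hCB : C ⊓ B ≠ ⊥) (hCAB : ¬C ≤ A ⊔ B) :
    C ⊓ (A ⊔ B) = A ⊓ B := by
  have hle : finrank K ↥(C ⊓ (A ⊔ B)) ≤ 1 := by
    have := finrank_lt_finrank_of_lt (inf_le_left.lt_of_ne fun h => hCAB (inf_eq_left.mp h))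
    omega
  have hA := eq_of_le_of_ne_bot_of_finrank_le_one (inf_le_inf_left C le_sup_left) hCA hle
  have hB := eq_of_le_of_ne_bot_of_finrank_le_one (inf_le_inf_left C le_sup_right) hCB hle
  refine eq_of_le_of_ne_bot_of_finrank_le_one ?_ (hA ▸ hCA) hAB
  rw [← hA]
  exact le_inf inf_le_right ((hA.trans hB.symm).le.trans inf_le_right)

theorem finrank_iSup_le_three_or_finrank_iInf_eq_one {ι : Type*} (F : ι → Submodule K V)
    (hF : ∀ i, finrank K (F i) = 2) (hFF : ∀ i j, F i ⊓ F j ≠ ⊥) :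
    finrank K ↥(⨆ i, F i) ≤ 3 ∨ finrank K ↥(⨅ i, F i) = 1 := by
  by_cases hne : ∃ i j, F i ≠ F j
  swap
  · push Not at hne
    left
    rcases isEmpty_or_nonempty ι with hι | ⟨⟨i⟩⟩
    · rw [iSup_of_empty, finrank_bot]; omega
    · calc finrank K ↥(⨆ j, F j) ≤ finrank K (F i) :=
            finrank_mono (iSup_le fun j => (hne j i).le)
        _ ≤ 3 := by rw [hF i]; omega
  obtain ⟨i, j, hij⟩ := hne
  have hL : finrank K ↥(F i ⊓ F j) = 1 := by
    have hlt : F i ⊓ F j < F i := inf_le_left.lt_of_ne fun h =>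
      hij (eq_of_le_of_finrank_le (h ▸ inf_le_right) (by rw [hF i, hF j]))
    have := finrank_lt_finrank_of_lt hlt
    have := one_le_finrank_iff.mpr (hFF i j)
    have := hF i
    omega
  by_cases hS : ∀ k, F k ≤ F i ⊔ F j
  · left
    have := finrank_sup_add_finrank_inf_eq (F i) (F j)
    have : finrank K ↥(⨆ k, F k) ≤ _ := finrank_mono (iSup_le hS)
    have := hF i
    have := hF j
    omega
  right
  push Not at hS
  obtain ⟨k, hk⟩ := hS
  have hkS := inf_sup_eq_inf_of_not_le hL.le (hF k).le (hFF k i) (hFF k j) hk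
  have hLm : ∀ m, F i ⊓ F j ≤ F m := by
    intro m
    by_cases hm : F m ≤ F i ⊔ F j
    · have hmk : F m ⊓ F k = F i ⊓ F j := by
        refine eq_of_le_of_ne_bot_of_finrank_le_one ?_ (hFF m k) hL.le
        rw [← hkS, inf_comm]
        exact inf_le_inf_left (F k) hm
      exact hmk ▸ inf_le_left
    · rw [← inf_sup_eq_inf_of_not_le hL.le (hF m).le (hFF m i) (hFF m j) hm]
      exact inf_le_left
  rwa [le_antisymm (le_inf (iInf_le F i) (iInf_le F j)) (le_iInf hLm)]

end Submodule

namespace LinearMap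

section Field

variable {K V : Type*} [Field K] [AddCommGroup V] [Module K V] [FiniteDimensional K V]

theorem det_eq_det_restrict_mul_det_restrict {p q : Submodule K V} (h : IsCompl p q)
    (f : V →ₗ[K] V) (hp : ∀ x ∈ p, f x ∈ p) (hq : ∀ x ∈ q, f x ∈ q) :
    LinearMap.det f = LinearMap.det (f.restrict hp) * LinearMap.det (f.restrict hq) := by
  set e := p.prodEquivOfIsCompl q h
  have hconj : (e.symm : V →ₗ[K] p × q) ∘ₗ f ∘ₗ (e.symm.symm : p × q →ₗ[K] V) =
      prodMap (f.restrict hp) (f.restrict hq) := by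
    ext x <;> simp [e, hp, hq]
  rw [← det_conj f e.symm, hconj, det_prodMap]

theorem finrank_range_eq_add_of_isCompl {p q : Submodule K V} (h : IsCompl p q)
    (f : V →ₗ[K] V) (hp : ∀ x ∈ p, f x ∈ p) (hq : ∀ x ∈ q, f x ∈ q) :
    finrank K (range f) =
      finrank K (range (f.restrict hp)) + finrank K (range (f.restrict hq)) := by
  have hmp : p.map f ≤ p := Submodule.map_le_iff_le_comap.mpr hp
  have hmq : q.map f ≤ q := Submodule.map_le_iff_le_comap.mpr hq
  rw [range_restrict, range_restrict, (Submodule.comapSubtypeEquivOfLe hmp).finrank_eq,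
    (Submodule.comapSubtypeEquivOfLe hmq).finrank_eq, range_eq_map, ← h.sup_eq_top,
    Submodule.map_sup, ← Submodule.finrank_sup_add_finrank_inf_eq,
    (h.disjoint.mono hmp hmq).eq_bot, finrank_bot, add_zero]

theorem eq_one_of_det_eq_one_of_finrank_eq_one (hV : finrank K V = 1) {f : V →ₗ[K] V}
    (hf : LinearMap.det f = 1) : f = 1 := by
  obtain ⟨c, rfl, -⟩ := f.existsUnique_eq_smul_id_of_finrank_eq_one hV
  rw [det_smul, hV, pow_one, det_id, mul_one] at hf
  rw [hf, one_smul]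
  rfl

theorem finrank_range_sub_one_eq_zero_iff {f : V →ₗ[K] V} :
    finrank K (range (f - 1)) = 0 ↔ f = 1 := by
  rw [Submodule.finrank_eq_zero, range_eq_bot, sub_eq_zero]

end Field

section InnerProductSpace

variable {𝕜 E : Type*} [RCLike 𝕜] [NormedAddCommGroup E] [InnerProductSpace 𝕜 E]
  [FiniteDimensional 𝕜 E] {f s t : E →ₗ[𝕜] E}

theorem ker_sub_one_eq_orthogonal_range (hf : ∀ x y, ⟪f x, f y⟫_𝕜 = ⟪x, y⟫_𝕜) :
    ker (f - 1) = (range (f - 1))ᗮ := by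
  refine Submodule.eq_of_le_of_finrank_eq ?_ ?_
  · intro x hx
    rw [Submodule.mem_orthogonal]
    rintro _ ⟨y, rfl⟩
    have hx' : f x = x := by simpa [sub_eq_zero] using hx
    simp [inner_sub_left, ← hf y x, hx']
  · have := finrank_range_add_finrank_ker (f - 1)
    have := (range (f - 1)).finrank_add_finrank_orthogonal
    omega

theorem isCompl_ker_sub_one_range_sub_one (hf : ∀ x y, ⟪f x, f y⟫_𝕜 = ⟪x, y⟫_𝕜) :
    IsCompl (ker (f - 1)) (range (f - 1)) := by
  rw [ker_sub_one_eq_orthogonal_range hf]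
  exact (range (f - 1)).isCompl_orthogonal.symm

theorem finrank_range_sub_one_ne_one_of_det_eq_one (hf : ∀ x y, ⟪f x, f y⟫_𝕜 = ⟪x, y⟫_𝕜)
    (hdet : LinearMap.det f = 1) : finrank 𝕜 (range (f - 1)) ≠ 1 := by
  intro h1
  have hc := isCompl_ker_sub_one_range_sub_one hf
  have hker : ∀ x ∈ ker (f - 1), f x ∈ ker (f - 1) := fun x hx => by
    rwa [show f x = x by simpa [sub_eq_zero] using hx]
  have hran : ∀ x ∈ range (f - 1), f x ∈ range (f - 1) := by
    rintro _ ⟨y, rfl⟩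
    exact ⟨f y, by simp⟩
  have hfK : f.restrict hker = 1 := by
    ext ⟨x, hx⟩
    simpa [sub_eq_zero] using hx
  have hfR : f.restrict hran = 1 := by
    rw [det_eq_det_restrict_mul_det_restrict hc f hker hran, hfK, map_one, one_mul] at hdet
    exact eq_one_of_det_eq_one_of_finrank_eq_one h1 hdet
  have hle : range (f - 1) ≤ ker (f - 1) := fun x hx => by
    simpa [sub_eq_zero] using congrArg Subtype.val (LinearMap.congr_fun hfR ⟨x, hx⟩)
  rw [hc.disjoint.symm.eq_bot_of_le hle, finrank_bot] at h1
  exact zero_ne_one h1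

theorem finrank_range_sub_one_add_le (hs : ∀ x y, ⟪s x, s y⟫_𝕜 = ⟪x, y⟫_𝕜)
    (ht : ∀ x y, ⟪t x, t y⟫_𝕜 = ⟪x, y⟫_𝕜) (h : Disjoint (range (s - 1)) (range (t - 1))) :
    finrank 𝕜 (range (s - 1)) + finrank 𝕜 (range (t - 1)) ≤ finrank 𝕜 (range (s - t)) := by
  have hker : ker (s - t) ≤ (range (s - 1) ⊔ range (t - 1))ᗮ := by
    rw [← Submodule.inf_orthogonal, ← ker_sub_one_eq_orthogonal_range hs,
      ← ker_sub_one_eq_orthogonal_range ht]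
    intro x hx
    have hst : (s - 1) x = (t - 1) x := by simpa [sub_eq_zero] using hx
    have h0 : (s - 1) x = 0 := Submodule.disjoint_def.mp h _ ⟨x, rfl⟩ (hst ▸ ⟨x, rfl⟩)
    exact ⟨h0, show (t - 1) x = 0 from hst ▸ h0⟩
  have := finrank_range_add_finrank_ker (s - t)
  have := (range (s - 1) ⊔ range (t - 1)).finrank_add_finrank_orthogonal
  have := Submodule.finrank_sup_add_finrank_inf_eq (range (s - 1)) (range (t - 1))
  have := Submodule.finrank_mono hker
  rw [h.eq_bot, finrank_bot] at *
  omega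

end InnerProductSpace

end LinearMap

theorem Subgroup.eq_top_or_eq_top_of_forall_mem_or {G : Type*} [Group G] {H K : Subgroup G}
    (h : ∀ x, x ∈ H ∨ x ∈ K) : H = ⊤ ∨ K = ⊤ := by
  simp only [Subgroup.eq_top_iff']
  by_contra! ⟨⟨x, hx⟩, ⟨y, hy⟩⟩
  rcases h (x * y) with hxy | hxy
  · exact hx ((H.mul_mem_cancel_right ((h y).resolve_right hy)).mp hxy)
  · exact hy ((K.mul_mem_cancel_left ((h x).resolve_left hx)).mp hxy)

namespace MonoidHom

variable {Γ : Type*} [Group Γ]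

theorem mem_comap_centralizer_image_iff {H : Type*} [Group H] (f : Γ →* H) (s : Set Γ) (a : Γ) :
    a ∈ (Subgroup.centralizer (f '' s)).comap f ↔ ∀ b ∈ s, Commute (f a) (f b) := by
  simp only [Subgroup.mem_comap, Subgroup.mem_centralizer_iff, Set.forall_mem_image]
  exact forall₂_congr fun b _ => eq_comm

theorem forall_commute_or_forall_commute {H₁ H₂ : Type*} [Group H₁] [Group H₂]
    (f₁ : Γ →* H₁) (f₂ : Γ →* H₂) (h : ∀ a b, Commute (f₁ a) (f₁ b) ∨ Commute (f₂ a) (f₂ b)) :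
    (∀ a b, Commute (f₁ a) (f₁ b)) ∨ ∀ a b, Commute (f₂ a) (f₂ b) := by
  have hpoint (a : Γ) : (∀ b, Commute (f₁ b) (f₁ a)) ∨ ∀ b, Commute (f₂ b) (f₂ a) := by
    have := Subgroup.eq_top_or_eq_top_of_forall_mem_or
      (H := (Subgroup.centralizer (f₁ '' {a})).comap f₁)
      (K := (Subgroup.centralizer (f₂ '' {a})).comap f₂) fun b => by
        simpa only [mem_comap_centralizer_image_iff, Set.mem_singleton_iff, forall_eq] using h b a
    simpa only [Subgroup.eq_top_iff', mem_comap_centralizer_image_iff, Set.mem_singleton_iff,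
      forall_eq] using this
  have := Subgroup.eq_top_or_eq_top_of_forall_mem_or
    (H := (Subgroup.centralizer (f₁ '' Set.univ)).comap f₁)
    (K := (Subgroup.centralizer (f₂ '' Set.univ)).comap f₂) fun a => by
      simpa only [mem_comap_centralizer_image_iff, Set.mem_univ, true_implies, Commute.symm_iff]
        using hpoint a
  simpa only [Subgroup.eq_top_iff', mem_comap_centralizer_image_iff, Set.mem_univ,
    true_implies] using this

theorem map_commutatorElement_eq_one_iff {M : Type*} [Monoid M] (f : Γ →* M) (a b : Γ) :
    f ⁅a, b⁆ = 1 ↔ Commute (f a) (f b) := by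
  rw [← f.coe_toHomUnits, ← f.coe_toHomUnits a, ← f.coe_toHomUnits b, Units.val_eq_one,
    Commute.units_val_iff, map_commutatorElement, commutatorElement_eq_one_iff_commute]

end MonoidHom

theorem Module.End.exists_forall_apply_eq_smul_of_commute {K V ι : Type*} [Field K]
    [IsAlgClosed K] [AddCommGroup V] [Module K V] [FiniteDimensional K V] [Nontrivial V]
    (f : ι → Module.End K V) (hf : ∀ i j, Commute (f i) (f j)) :
    ∃ v ≠ 0, ∀ i, ∃ μ : K, f i v = μ • v := by
  obtain ⟨W, ⟨hW0, hWf⟩, hWmin⟩ := wellFounded_lt.has_min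
    {W : Submodule K V | W ≠ ⊥ ∧ ∀ i, ∀ x ∈ W, f i x ∈ W} ⟨⊤, top_ne_bot, fun _ _ _ => trivial⟩
  obtain ⟨v, hvW, hv0⟩ := W.ne_bot_iff.mp hW0
  refine ⟨v, hv0, fun i => ?_⟩
  have : Nontrivial W := Submodule.nontrivial_iff_ne_bot.mpr hW0
  obtain ⟨μ, hμ⟩ := Module.End.exists_eigenvalue ((f i).restrict (hWf i))
  obtain ⟨u, hu⟩ := hμ.exists_hasEigenvector
  have hWμ : W ⊓ (f i).eigenspace μ = W := by
    refine eq_of_le_of_not_lt inf_le_left (hWmin _ ⟨?_, fun j x ⟨hxW, hx⟩ => ⟨hWf j x hxW, ?_⟩⟩)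
    · refine (Submodule.ne_bot_iff _).mpr ⟨u, ⟨u.2, ?_⟩, fun h => hu.2 (Subtype.ext h)⟩
      exact Module.End.mem_eigenspace_iff.mpr (congrArg Subtype.val hu.apply_eq_smul)
    · rw [SetLike.mem_coe, Module.End.mem_eigenspace_iff] at hx ⊢
      rw [← Module.End.mul_apply, (hf i j).eq, Module.End.mul_apply, hx, map_smul]
  exact ⟨μ, Module.End.mem_eigenspace_iff.mp (hWμ.symm ▸ hvW : v ∈ W ⊓ _).2⟩

namespace Representation

section Field

variable {K Γ V : Type*} [Field K] [Group Γ] [AddCommGroup V] [Module K V]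
  (ρ : Representation K Γ V)

theorem range_apply_eq_top (g : Γ) : range (ρ g) = ⊤ :=
  LinearMap.range_eq_top.mpr (ρ.apply_bijective g).2

theorem finrank_range_sub (a b : Γ) :
    finrank K (range (ρ a - ρ b)) = finrank K (range (ρ (a * b⁻¹) - 1)) := by
  have : ρ a - ρ b = (ρ (a * b⁻¹) - 1) * ρ b := by
    rw [sub_mul, ← map_mul, inv_mul_cancel_right, one_mul]
  rw [this, Module.End.mul_eq_comp,
    LinearMap.range_comp_of_range_eq_top _ (ρ.range_apply_eq_top b)]

theorem finrank_range_commutator_sub_one (a b : Γ) :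
    finrank K (range (ρ ⁅a, b⁆ - 1)) = finrank K (range (ρ a * ρ b - ρ b * ρ a)) := by
  rw [← map_mul, ← map_mul, finrank_range_sub, commutatorElement_def]
  congr 5
  group

theorem map_range_sub_one (g w : Γ) :
    (range (ρ w - 1)).map (ρ g) = range (ρ (g * w * g⁻¹) - 1) := by
  have : ρ g * (ρ w - 1) = (ρ (g * w * g⁻¹) - 1) * ρ g := by
    rw [mul_sub, sub_mul, mul_one, one_mul, ← map_mul, ← map_mul, inv_mul_cancel_right]
  rw [← LinearMap.range_comp, ← Module.End.mul_eq_comp, this, Module.End.mul_eq_comp,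
    LinearMap.range_comp_of_range_eq_top _ (ρ.range_apply_eq_top g)]

theorem map_map_apply (R : Submodule K V) (g h : Γ) :
    (R.map (ρ g)).map (ρ h) = R.map (ρ (h * g)) := by
  rw [map_mul, Module.End.mul_eq_comp, Submodule.map_comp]

end Field

end Representation

namespace Subrepresentation

variable {K Γ V : Type*} [Field K] [Group Γ] [AddCommGroup V] [Module K V]

def span (ρ : Representation K Γ V) (R : Submodule K V) : Subrepresentation ρ where
  toSubmodule := ⨆ g, R.map (ρ g)
  apply_mem_toSubmodule h v hv := by
    have hmap : (⨆ g, R.map (ρ g)).map (ρ h) ≤ ⨆ g, R.map (ρ g) := by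
      rw [Submodule.map_iSup]
      exact iSup_le fun g =>
        (ρ.map_map_apply R g h).le.trans (le_iSup (fun g => R.map (ρ g)) (h * g))
    exact hmap (Submodule.mem_map_of_mem hv)

def core (ρ : Representation K Γ V) (R : Submodule K V) : Subrepresentation ρ where
  toSubmodule := ⨅ g, R.map (ρ g)
  apply_mem_toSubmodule h v hv := by
    rw [Submodule.mem_iInf] at hv ⊢
    intro g
    have := Submodule.mem_map_of_mem (f := ρ h) (hv (h⁻¹ * g))
    rwa [ρ.map_map_apply, mul_inv_cancel_left] at this

theorem le_span (ρ : Representation K Γ V) (R : Submodule K V) : R ≤ (span ρ R).toSubmodule :=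
  le_iSup_of_le 1 (by rw [map_one, Module.End.one_eq_id, Submodule.map_id])

theorem core_le (ρ : Representation K Γ V) (R : Submodule K V) : (core ρ R).toSubmodule ≤ R :=
  iInf_le_of_le 1 (by rw [map_one, Module.End.one_eq_id, Submodule.map_id])

theorem commute_toRepresentation {ρ : Representation K Γ V} (σ : Subrepresentation ρ) {a b : Γ}
    (h : Commute (ρ a) (ρ b)) : Commute (σ.toRepresentation a) (σ.toRepresentation b) :=
  LinearMap.ext fun x => Subtype.ext (LinearMap.congr_fun h.eq x)

end Subrepresentation

namespace Representation

variable {𝕜 Γ E : Type*} [RCLike 𝕜] [Group Γ] [NormedAddCommGroup E] [InnerProductSpace 𝕜 E]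

def IsUnitary (ρ : Representation 𝕜 Γ E) : Prop :=
  ∀ g x y, ⟪ρ g x, ρ g y⟫_𝕜 = ⟪x, y⟫_𝕜

namespace IsUnitary

variable {ρ : Representation 𝕜 Γ E}

def orthogonal (hρ : ρ.IsUnitary) (σ : Subrepresentation ρ) : Subrepresentation ρ where
  toSubmodule := σ.toSubmoduleᗮ
  apply_mem_toSubmodule g v hv := by
    rw [Submodule.mem_orthogonal] at hv ⊢
    intro u hu
    rw [← ρ.self_inv_apply g u, hρ]
    exact hv _ (σ.apply_mem_toSubmodule g⁻¹ hu)

theorem toRepresentation (hρ : ρ.IsUnitary) (σ : Subrepresentation ρ) :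
    σ.toRepresentation.IsUnitary :=
  fun g x y => hρ g x y

variable [FiniteDimensional 𝕜 E]

theorem finrank_range_commutator_sub_one_ne_one (hρ : ρ.IsUnitary) (a b : Γ) :
    finrank 𝕜 (range (ρ ⁅a, b⁆ - 1)) ≠ 1 :=
  LinearMap.finrank_range_sub_one_ne_one_of_det_eq_one (hρ _)
    ((MonoidHom.map_commutatorElement_eq_one_iff (LinearMap.det.comp ρ) a b).mpr
      (Commute.all _ _))

theorem toRepresentation_commutator_eq_one (hρ : ρ.IsUnitary) (σ : Subrepresentation ρ)
    (hσ : finrank 𝕜 σ.toSubmodule ≤ 1) (a b : Γ) : σ.toRepresentation ⁅a, b⁆ = 1 := by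
  have h1 := (hρ.toRepresentation σ).finrank_range_commutator_sub_one_ne_one a b
  have h2 := LinearMap.finrank_range_le (σ.toRepresentation ⁅a, b⁆ - 1)
  exact LinearMap.finrank_range_sub_one_eq_zero_iff.mp (by omega)

theorem disjoint_range_sub_one (hρ : ρ.IsUnitary) {σ : Subrepresentation ρ} {w : Γ}
    (h : σ.toRepresentation w = 1) :
    Disjoint σ.toSubmodule (range (ρ w - 1)) :=
  (LinearMap.isCompl_ker_sub_one_range_sub_one (hρ w)).disjoint.mono_left fun x hx => by
    rw [LinearMap.mem_ker, LinearMap.sub_apply, Module.End.one_apply, sub_eq_zero]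
    exact congrArg Subtype.val (LinearMap.congr_fun h ⟨x, hx⟩)

theorem forall_commute_or_forall_commute_orthogonal (hρ : ρ.IsUnitary)
    (hr : ∀ a b : Γ, finrank 𝕜 (range (ρ ⁅a, b⁆ - 1)) ≤ 2) (σ : Subrepresentation ρ) :
    (∀ a b, Commute (σ.toRepresentation a) (σ.toRepresentation b)) ∨
      ∀ a b, Commute ((hρ.orthogonal σ).toRepresentation a)
        ((hρ.orthogonal σ).toRepresentation b) := by
  simp only [← asGroupHom_apply, Commute.units_val_iff]
  refine MonoidHom.forall_commute_or_forall_commute _ _ fun a b => ?_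
  simp only [← MonoidHom.map_commutatorElement_eq_one_iff, ← Units.val_eq_one, asGroupHom_apply]
  have hσ : ∀ x ∈ σ.toSubmodule, (ρ ⁅a, b⁆ - 1) x ∈ σ.toSubmodule := fun x hx =>
    sub_mem (σ.apply_mem_toSubmodule _ hx) hx
  have hσ' : ∀ x ∈ (hρ.orthogonal σ).toSubmodule,
      (ρ ⁅a, b⁆ - 1) x ∈ (hρ.orthogonal σ).toSubmodule := fun x hx =>
    sub_mem ((hρ.orthogonal σ).apply_mem_toSubmodule _ hx) hx
  have hc : IsCompl σ.toSubmodule (hρ.orthogonal σ).toSubmodule :=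
    σ.toSubmodule.isCompl_orthogonal
  have hsplit := LinearMap.finrank_range_eq_add_of_isCompl hc _ hσ hσ'
  rw [show (ρ ⁅a, b⁆ - 1).restrict hσ = σ.toRepresentation ⁅a, b⁆ - 1 from rfl,
    show (ρ ⁅a, b⁆ - 1).restrict hσ' = (hρ.orthogonal σ).toRepresentation ⁅a, b⁆ - 1 from rfl]
    at hsplit
  have h1 := (hρ.toRepresentation σ).finrank_range_commutator_sub_one_ne_one a b
  have h2 :=
    (hρ.toRepresentation (hρ.orthogonal σ)).finrank_range_commutator_sub_one_ne_one a b
  have h3 := hr a b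
  rw [← LinearMap.finrank_range_sub_one_eq_zero_iff,
    ← LinearMap.finrank_range_sub_one_eq_zero_iff]
  omega

theorem finrank_range_commutator_sub_one_eq_two (hρ : ρ.IsUnitary)
    (hr : ∀ a b : Γ, finrank 𝕜 (range (ρ ⁅a, b⁆ - 1)) ≤ 2) {a b : Γ}
    (hab : ¬Commute (ρ a) (ρ b)) : finrank 𝕜 (range (ρ ⁅a, b⁆ - 1)) = 2 := by
  have h0 : finrank 𝕜 (range (ρ ⁅a, b⁆ - 1)) ≠ 0 := fun h =>
    hab ((ρ.map_commutatorElement_eq_one_iff a b).mp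
      (LinearMap.finrank_range_sub_one_eq_zero_iff.mp h))
  have := hρ.finrank_range_commutator_sub_one_ne_one a b
  have := hr a b
  omega

theorem finrank_span_range_commutator_sub_one_le_three (hρ : ρ.IsUnitary)
    (hr : ∀ a b : Γ, finrank 𝕜 (range (ρ ⁅a, b⁆ - 1)) ≤ 2) {a b : Γ}
    (hw : finrank 𝕜 (range (ρ ⁅a, b⁆ - 1)) = 2) :
    finrank 𝕜 (Subrepresentation.span ρ (range (ρ ⁅a, b⁆ - 1))).toSubmodule ≤ 3 := by
  set w := ⁅a, b⁆
  have hF (g : Γ) : finrank 𝕜 ((range (ρ w - 1)).map (ρ g)) = 2 := by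
    rw [← hw]
    exact (Submodule.equivMapOfInjective _ (ρ.apply_bijective g).1 _).finrank_eq.symm
  have hFF (g h : Γ) : (range (ρ w - 1)).map (ρ g) ⊓ (range (ρ w - 1)).map (ρ h) ≠ ⊥ := by
    intro hbot
    have hsum := LinearMap.finrank_range_sub_one_add_le (hρ _) (hρ _)
      (disjoint_iff.mpr (ρ.map_range_sub_one g w ▸ ρ.map_range_sub_one h w ▸ hbot))
    rw [← ρ.map_range_sub_one, ← ρ.map_range_sub_one, hF, hF, finrank_range_sub,
      show g * w * g⁻¹ * (h * w * h⁻¹)⁻¹ = ⁅g * w * g⁻¹, h * g⁻¹⁆ by group] at hsum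
    have := hr (g * w * g⁻¹) (h * g⁻¹)
    omega
  refine (Submodule.finrank_iSup_le_three_or_finrank_iInf_eq_one _ hF hFF).resolve_right
    fun hcore => ?_
  set C := Subrepresentation.core ρ (range (ρ w - 1))
  have hC : C.toSubmodule = ⊥ :=
    (hρ.disjoint_range_sub_one
      (hρ.toRepresentation_commutator_eq_one C hcore.le a b)).eq_bot_of_le
        (Subrepresentation.core_le ρ _)
  rw [show (⨅ g, (range (ρ w - 1)).map (ρ g)) = C.toSubmodule from rfl, hC, finrank_bot] at hcore
  exact zero_ne_one hcore

end IsUnitary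

end Representation

namespace Representation.IsUnitary

variable {Γ E : Type*} [Group Γ] [NormedAddCommGroup E] [InnerProductSpace ℂ E]
  [FiniteDimensional ℂ E] [Nontrivial E] {ρ : Representation ℂ Γ E}

theorem exists_subrepresentation_forall_commute_orthogonal (hρ : ρ.IsUnitary)
    (hr : ∀ a b, finrank ℂ (range (ρ a * ρ b - ρ b * ρ a)) ≤ 2) :
    ∃ σ : Subrepresentation ρ, 1 ≤ finrank ℂ σ.toSubmodule ∧ finrank ℂ σ.toSubmodule ≤ 3 ∧
      ∀ a b, Commute ((hρ.orthogonal σ).toRepresentation a)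
        ((hρ.orthogonal σ).toRepresentation b) := by
  by_cases hab : ∀ a b, Commute (ρ a) (ρ b)
  · obtain ⟨v, hv0, hv⟩ := Module.End.exists_forall_apply_eq_smul_of_commute ρ hab
    let L : Subrepresentation ρ := ⟨ℂ ∙ v, fun g x hx => by
      obtain ⟨c, rfl⟩ := Submodule.mem_span_singleton.mp hx
      obtain ⟨μ, hμ⟩ := hv g
      rw [map_smul, hμ, smul_smul]
      exact Submodule.mem_span_singleton.mpr ⟨c * μ, rfl⟩⟩
    have hL : finrank ℂ L.toSubmodule = 1 := finrank_span_singleton hv0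
    exact ⟨L, hL.ge, by omega, fun a b => (hρ.orthogonal L).commute_toRepresentation (hab a b)⟩
  push Not at hab
  obtain ⟨a, b, hab⟩ := hab
  have hr' (a b : Γ) : finrank ℂ (range (ρ ⁅a, b⁆ - 1)) ≤ 2 :=
    (ρ.finrank_range_commutator_sub_one a b).trans_le (hr a b)
  have h2 := hρ.finrank_range_commutator_sub_one_eq_two hr' hab
  set V := Subrepresentation.span ρ (range (ρ ⁅a, b⁆ - 1))
  have hRV := Subrepresentation.le_span ρ (range (ρ ⁅a, b⁆ - 1))
  refine ⟨V, one_le_two.trans (h2 ▸ Submodule.finrank_mono hRV),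
    hρ.finrank_span_range_commutator_sub_one_le_three hr' h2,
    (hρ.forall_commute_or_forall_commute_orthogonal hr' V).resolve_left fun hV => ?_⟩
  have hw := (V.toRepresentation.map_commutatorElement_eq_one_iff a b).mpr (hV a b)
  rw [(hρ.disjoint_range_sub_one hw).eq_bot_of_ge hRV, finrank_bot] at h2
  omega

end Representation.IsUnitary

namespace Matrix

variable {𝕜 ι : Type*} [RCLike 𝕜] [Fintype ι] [DecidableEq ι]

noncomputable def unitaryGroupRep :
    Representation 𝕜 (unitaryGroup ι 𝕜) (EuclideanSpace 𝕜 ι) where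
  toFun U := toEuclideanLin (U : Matrix ι ι 𝕜)
  map_one' := by simp [Module.End.one_eq_id]
  map_mul' U V := by simp [Module.End.mul_eq_comp]

theorem unitaryGroupRep_apply (U : unitaryGroup ι 𝕜) :
    unitaryGroupRep U = toEuclideanLin (U : Matrix ι ι 𝕜) := rfl

theorem unitaryGroupRep_mul_sub (U V : unitaryGroup ι 𝕜) :
    unitaryGroupRep U * unitaryGroupRep V - unitaryGroupRep V * unitaryGroupRep U =
      toEuclideanLin ((U : Matrix ι ι 𝕜) * (V : Matrix ι ι 𝕜) -
        (V : Matrix ι ι 𝕜) * (U : Matrix ι ι 𝕜)) := by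
  simp [unitaryGroupRep_apply, Module.End.mul_eq_comp]

theorem isUnitary_unitaryGroupRep :
    (unitaryGroupRep : Representation 𝕜 (unitaryGroup ι 𝕜) _).IsUnitary := fun U x y => by
  rw [unitaryGroupRep_apply, ← coe_toEuclideanCLM_eq_toEuclideanLin]
  exact ContinuousLinearMap.inner_map_map_of_mem_unitary (Unitary.map_mem toEuclideanCLM U.2) x y

theorem rank_eq_finrank_range_toEuclideanLin (M : Matrix ι ι 𝕜) :
    M.rank = finrank 𝕜 (range (toEuclideanLin M)) := by
  rw [toEuclideanLin, toLpLin_eq_toLin]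
  exact M.rank_eq_finrank_range_toLin _ _

end Matrix

/-- If `G` is a group of unitary `n × n` matrices with `rank (AB - BA) ≤ 2` for all
`A, B ∈ G`, then there is a subspace `M` with `1 ≤ dim M ≤ 3` invariant under every element
of `G` (hence so is `M^⊥`), such that the restrictions to `M^⊥` commute. -/
theorem stmt12 (n : ℕ) (hn : 0 < n) (G : Subgroup (Matrix.unitaryGroup (Fin n) ℂ))
    (hr : ∀ A ∈ G, ∀ B ∈ G,
      ((A : Matrix (Fin n) (Fin n) ℂ) * (B : Matrix (Fin n) (Fin n) ℂ)
        - (B : Matrix (Fin n) (Fin n) ℂ) * (A : Matrix (Fin n) (Fin n) ℂ)).rank ≤ 2) :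
    ∃ M : Submodule ℂ (EuclideanSpace ℂ (Fin n)),
      1 ≤ Module.finrank ℂ M ∧ Module.finrank ℂ M ≤ 3 ∧
      (∀ T ∈ G, M.map (Matrix.toEuclideanLin (T : Matrix (Fin n) (Fin n) ℂ)) ≤ M) ∧
      (∀ T ∈ G, Mᗮ.map (Matrix.toEuclideanLin (T : Matrix (Fin n) (Fin n) ℂ)) ≤ Mᗮ) ∧
      (∀ T₁ ∈ G, ∀ T₂ ∈ G, ∀ x ∈ Mᗮ,
        Matrix.toEuclideanLin (T₁ : Matrix (Fin n) (Fin n) ℂ)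
            (Matrix.toEuclideanLin (T₂ : Matrix (Fin n) (Fin n) ℂ) x) =
          Matrix.toEuclideanLin (T₂ : Matrix (Fin n) (Fin n) ℂ)
            (Matrix.toEuclideanLin (T₁ : Matrix (Fin n) (Fin n) ℂ) x)) := by
  have : Nontrivial (EuclideanSpace ℂ (Fin n)) :=
    Module.finrank_pos_iff.mp (by rwa [finrank_euclideanSpace_fin])
  let ρ : Representation ℂ G (EuclideanSpace ℂ (Fin n)) :=
    Matrix.unitaryGroupRep.comp G.subtype
  have hρ : ρ.IsUnitary := fun T => Matrix.isUnitary_unitaryGroupRep T.1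
  obtain ⟨σ, h1, h3, hcomm⟩ := hρ.exists_subrepresentation_forall_commute_orthogonal fun A B => by
    rw [show ρ A * ρ B - ρ B * ρ A = _ from Matrix.unitaryGroupRep_mul_sub A.1 B.1,
      ← Matrix.rank_eq_finrank_range_toEuclideanLin]
    exact hr A A.2 B B.2
  refine ⟨σ.toSubmodule, h1, h3, fun T hT => ?_, fun T hT => ?_, fun T₁ h₁ T₂ h₂ x hx => ?_⟩
  · exact Submodule.map_le_iff_le_comap.mpr fun x hx => σ.apply_mem_toSubmodule ⟨T, hT⟩ hx
  · exact Submodule.map_le_iff_le_comap.mpr fun x hx =>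
      (hρ.orthogonal σ).apply_mem_toSubmodule ⟨T, hT⟩ hx
  · exact congrArg Subtype.val (LinearMap.congr_fun (hcomm ⟨T₁, h₁⟩ ⟨T₂, h₂⟩) ⟨x, hx⟩)
end

section
/- Let G = G(p,q,A) with D its set of diagonal elements, 𝔖 the cyclic subgroup generated by S, and C the commutator subgroup of G. Then G = D𝔖 = 𝔖D and C ⊆ D. -/
open Matrix

/-! Conjugation by the cyclic shift `S` permutes the entries of a diagonal matrix, so `S`
normalizes the diagonal subgroup `D`, which also contains `A`. Hence every word in `S` and `A`
can be rewritten as `d * S ^ k` with `d ∈ D`, and the commutator of `d * S ^ k` and `e * S ^ l`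
is `d * (S ^ k e S ^ (-k)) * (S ^ l d⁻¹ S ^ (-l)) * e⁻¹ ∈ D`. -/

namespace Subgroup

variable {M : Type*} [Group M] {N : Subgroup M} {s a : M}

theorem zpow_mul_mul_inv_mem_of_mem_normalizer (hs : s ∈ normalizer N) (k : ℤ) {x : M}
    (hx : x ∈ N) : s ^ k * x * (s ^ k)⁻¹ ∈ N :=
  (mem_normalizer_iff.mp (zpow_mem hs k) x).mp hx

theorem exists_mul_zpow_of_mem_closure_pair (hs : s ∈ normalizer N) (ha : a ∈ N) {x : M}
    (hx : x ∈ closure {s, a}) : ∃ n ∈ N, ∃ k : ℤ, x = n * s ^ k := by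
  induction hx using closure_induction with
  | mem x hx =>
    rcases hx with rfl | rfl
    · exact ⟨1, N.one_mem, 1, by simp⟩
    · exact ⟨x, ha, 0, by simp⟩
  | one => exact ⟨1, N.one_mem, 0, by simp⟩
  | mul x y _ _ hx hy =>
    obtain ⟨n, hn, k, rfl⟩ := hx
    obtain ⟨m, hm, l, rfl⟩ := hy
    exact ⟨n * (s ^ k * m * (s ^ k)⁻¹),
      N.mul_mem hn (zpow_mul_mul_inv_mem_of_mem_normalizer hs k hm), k + l, by group⟩
  | inv x _ hx =>
    obtain ⟨n, hn, k, rfl⟩ := hx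
    exact ⟨s ^ (-k) * n⁻¹ * (s ^ (-k))⁻¹,
      zpow_mul_mul_inv_mem_of_mem_normalizer hs (-k) (N.inv_mem hn), -k, by group⟩

theorem exists_mem_inf_mul_zpow_of_mem_closure_pair (hs : s ∈ normalizer N) (ha : a ∈ N)
    {x : M} (hx : x ∈ closure {s, a}) :
    ∃ n ∈ closure {s, a} ⊓ N, ∃ k : ℤ, x = n * s ^ k := by
  obtain ⟨n, hn, k, rfl⟩ := exists_mul_zpow_of_mem_closure_pair hs ha hx
  have hs_mem : s ∈ closure {s, a} := subset_closure (Set.mem_insert s {a})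
  refine ⟨n, ⟨?_, hn⟩, k, rfl⟩
  simpa using mul_mem hx (inv_mem (zpow_mem hs_mem k))

theorem exists_zpow_mul_mem_inf_of_mem_closure_pair (hs : s ∈ normalizer N) (ha : a ∈ N)
    {x : M} (hx : x ∈ closure {s, a}) :
    ∃ n ∈ closure {s, a} ⊓ N, ∃ k : ℤ, x = s ^ k * n := by
  obtain ⟨n, hn, k, hx_inv⟩ := exists_mem_inf_mul_zpow_of_mem_closure_pair hs ha (inv_mem hx)
  exact ⟨n⁻¹, inv_mem hn, -k, by rw [← inv_inv x, hx_inv]; group⟩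

open scoped commutatorElement in
theorem commutator_closure_pair_le (hs : s ∈ normalizer N) (ha : a ∈ N) :
    ⁅closure {s, a}, closure {s, a}⁆ ≤ N := by
  rw [commutator_le]
  intro x hx y hy
  obtain ⟨n, hn, k, rfl⟩ := exists_mul_zpow_of_mem_closure_pair hs ha hx
  obtain ⟨m, hm, l, rfl⟩ := exists_mul_zpow_of_mem_closure_pair hs ha hy
  have h_conj := zpow_mul_mul_inv_mem_of_mem_normalizer hs
  have key : ⁅n * s ^ k, m * s ^ l⁆
      = n * (s ^ k * m * (s ^ k)⁻¹) * (s ^ l * n⁻¹ * (s ^ l)⁻¹) * m⁻¹ := by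
    rw [commutatorElement_def]; group
  rw [key]
  exact N.mul_mem (N.mul_mem (N.mul_mem hn (h_conj k hm)) (h_conj l (N.inv_mem hn)))
    (N.inv_mem hm)

end Subgroup

namespace Matrix

def shiftMatrix (p : ℕ) [NeZero p] (α : Type*) [Zero α] [One α] : Matrix (Fin p) (Fin p) α :=
  of fun i j => if i = j + 1 then 1 else 0

theorem shiftMatrix_mul_diagonal {p : ℕ} [NeZero p] {α : Type*} [Semiring α] (d : Fin p → α) :
    shiftMatrix p α * diagonal d = diagonal (fun i => d (i - 1)) * shiftMatrix p α := by
  ext i j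
  rcases eq_or_ne i (j + 1) with rfl | h
  · simp [shiftMatrix, mul_apply, diagonal_apply]
  · simp [shiftMatrix, mul_apply, diagonal_apply, h]

variable (n α : Type*) [Fintype n] [DecidableEq n] [CommRing α] [StarRing α]

def diagonalUnitarySubgroup : Subgroup (unitaryGroup n α) where
  carrier := {X | ∃ d, (X : Matrix n n α) = diagonal d}
  one_mem' := ⟨1, diagonal_one.symm⟩
  mul_mem' := by
    rintro X Y ⟨d, hd⟩ ⟨e, he⟩
    exact ⟨d * e, by rw [UnitaryGroup.mul_val, hd, he, diagonal_mul_diagonal]; rfl⟩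
  inv_mem' := by
    rintro X ⟨d, hd⟩
    exact ⟨star d, by
      rw [UnitaryGroup.inv_val, star_eq_conjTranspose, hd, diagonal_conjTranspose]⟩

variable {n α}

theorem shiftMatrix_mem_normalizer_diagonalUnitarySubgroup {p : ℕ} [NeZero p]
    {S : unitaryGroup (Fin p) α} (hS : (S : Matrix (Fin p) (Fin p) α) = shiftMatrix p α) :
    S ∈ Subgroup.normalizer (diagonalUnitarySubgroup (Fin p) α : Set _) := by
  set D := diagonalUnitarySubgroup (Fin p) α
  have conj : ∀ X ∈ D, S * X * S⁻¹ ∈ D := by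
    rintro X ⟨d, hd⟩
    refine ⟨fun i => d (i - 1), ?_⟩
    rw [UnitaryGroup.mul_val, UnitaryGroup.mul_val, UnitaryGroup.inv_val, hd, hS,
      shiftMatrix_mul_diagonal, mul_assoc, ← hS, mem_unitaryGroup_iff.mp S.2, mul_one]
  have conj_inv : ∀ X ∈ D, S⁻¹ * X * S ∈ D := by
    rintro X ⟨d, hd⟩
    refine ⟨fun i => d (i + 1), ?_⟩
    have h := shiftMatrix_mul_diagonal (fun i => d (i + 1))
    simp only [sub_add_cancel] at h
    rw [UnitaryGroup.mul_val, UnitaryGroup.mul_val, UnitaryGroup.inv_val, hd, mul_assoc, hS, ← h,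
      ← hS, ← mul_assoc, UnitaryGroup.star_mul_self, one_mul]
  refine Subgroup.mem_normalizer_iff.mpr fun X => ⟨conj X, fun hX => ?_⟩
  simpa [mul_assoc] using conj_inv _ hX

end Matrix

theorem stmt15_general (p : ℕ) [NeZero p]
    (SU AU : Matrix.unitaryGroup (Fin p) ℂ)
    (hS : (SU : Matrix (Fin p) (Fin p) ℂ)
      = Matrix.of fun i j : Fin p => if i = j + 1 then (1 : ℂ) else 0)
    (ω : Fin p → ℂ) (hA : (AU : Matrix (Fin p) (Fin p) ℂ) = Matrix.diagonal ω)
    (G : Subgroup (Matrix.unitaryGroup (Fin p) ℂ)) (hG : G = Subgroup.closure {SU, AU}) :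
    (∀ X ∈ G, ∃ D ∈ G, (∃ d : Fin p → ℂ, (D : Matrix (Fin p) (Fin p) ℂ) = Matrix.diagonal d)
      ∧ ∃ k : ℤ, X = D * SU ^ k) ∧
    (∀ X ∈ G, ∃ D ∈ G, (∃ d : Fin p → ℂ, (D : Matrix (Fin p) (Fin p) ℂ) = Matrix.diagonal d)
      ∧ ∃ k : ℤ, X = SU ^ k * D) ∧
    (∀ X ∈ ⁅G, G⁆, ∃ d : Fin p → ℂ,
      (X : Matrix (Fin p) (Fin p) ℂ) = Matrix.diagonal d) := by
  have hS_norm := Matrix.shiftMatrix_mem_normalizer_diagonalUnitarySubgroup hS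
  have hA_mem : AU ∈ Matrix.diagonalUnitarySubgroup (Fin p) ℂ := ⟨ω, hA⟩
  subst hG
  refine ⟨fun X hX => ?_, fun X hX => ?_, fun X hX =>
    Subgroup.commutator_closure_pair_le hS_norm hA_mem hX⟩
  · obtain ⟨D, hD, k, rfl⟩ :=
      Subgroup.exists_mem_inf_mul_zpow_of_mem_closure_pair hS_norm hA_mem hX
    exact ⟨D, hD.1, hD.2, k, rfl⟩
  · obtain ⟨D, hD, k, rfl⟩ :=
      Subgroup.exists_zpow_mul_mem_inf_of_mem_closure_pair hS_norm hA_mem hX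
    exact ⟨D, hD.1, hD.2, k, rfl⟩

/-- For `G = G(p,q,A)` with diagonal part `D`, cyclic subgroup `𝔖 = ⟨S⟩` and commutator
subgroup `C`: `G = D𝔖 = 𝔖D` and `C ⊆ D`. -/
theorem stmt15 (p q : ℕ) [NeZero p] (hp : p.Prime) (hq : q.Prime)
    (SU AU : Matrix.unitaryGroup (Fin p) ℂ)
    (hS : (SU : Matrix (Fin p) (Fin p) ℂ)
      = Matrix.of fun i j : Fin p => if i = j + 1 then (1 : ℂ) else 0)
    (ω : Fin p → ℂ) (hA : (AU : Matrix (Fin p) (Fin p) ℂ) = Matrix.diagonal ω)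
    (hω : ∀ i, ω i ^ q = 1) (hns : ∃ i j, ω i ≠ ω j)
    (G : Subgroup (Matrix.unitaryGroup (Fin p) ℂ)) (hG : G = Subgroup.closure {SU, AU}) :
    (∀ X ∈ G, ∃ D ∈ G, (∃ d : Fin p → ℂ, (D : Matrix (Fin p) (Fin p) ℂ) = Matrix.diagonal d)
      ∧ ∃ k : ℤ, X = D * SU ^ k) ∧
    (∀ X ∈ G, ∃ D ∈ G, (∃ d : Fin p → ℂ, (D : Matrix (Fin p) (Fin p) ℂ) = Matrix.diagonal d)
      ∧ ∃ k : ℤ, X = SU ^ k * D) ∧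
    (∀ X ∈ ⁅G, G⁆, ∃ d : Fin p → ℂ,
      (X : Matrix (Fin p) (Fin p) ℂ) = Matrix.diagonal d) :=
  stmt15_general p SU AU hS ω hA G hG
end
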